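/- arXiv:1205.5997 — 8 statements merged into one kernel-verified Lean document; each statement's English description precedes it below -/
import Mathlib

section
/- Let φ ∈ C²(ℝ) and q continuous satisfy -φ'' + q(x)φ = O(|x|^{-α}) as x → -∞, with φ(x) → 0 as x → -∞ and q(x) ≥ c|x| for all sufficiently negative x, where α, c > 0 are constants. Then φ(x) = O(|x|^{-α-1}) as x → -∞. -/
/-!
For `p = α + 1` and `K` large, the barrier `ψ x = K (-x)^(-p)` satisfies
`-ψ'' + q ψ ≥ (c K / 2) |x|^(-α)` far enough to the left: `q ψ ≥ c K |x|^(1-p)` while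
`ψ'' = p (p+1) K |x|^(-p-2)` is of lower order. Hence `ψ ± φ` satisfy `-u'' + q u ≥ 0` with
`q > 0`, are nonnegative at the cutoff `b` once `K ≥ |φ b| |b|^p`, and tend to `0` at `-∞`. By the
minimum principle they are nonnegative: a negative minimum of `u` on `(-∞, b]` would be attained in
the interior, where `u'' ≥ 0 > q u`. So `|φ| ≤ ψ`.
-/

open Filter Topology Set

/-- If `deriv (deriv f) a < 0`, then `a` is also a local maximum, so `f` is locally constant. -/
theorem IsLocalMin.deriv_deriv_nonneg {f : ℝ → ℝ} {a : ℝ} (h : IsLocalMin f a)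
    (hf : ContinuousAt f a) : 0 ≤ deriv (deriv f) a := by
  by_contra! hneg
  have hconst : f =ᶠ[𝓝 a] fun _ ↦ f a :=
    (Filter.Eventually.and h (isLocalMax_of_deriv_deriv_neg hneg h.deriv_eq_zero hf)).mono
      fun x hx ↦ le_antisymm hx.2 hx.1
  exact hneg.ne (by rw [hconst.deriv.deriv_eq]; simp)

theorem nonneg_of_schrodinger_nonneg_Iic {u u' u'' q : ℝ → ℝ} {b : ℝ}
    (hu : ∀ x ≤ b, HasDerivAt u (u' x) x) (hu' : ∀ x ≤ b, HasDerivAt u' (u'' x) x)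
    (hq : ∀ x ≤ b, 0 < q x) (hL : ∀ x ≤ b, 0 ≤ -u'' x + q x * u x)
    (hb : 0 ≤ u b) (hlim : Tendsto u atBot (𝓝 0)) {x₀ : ℝ} (hx₀ : x₀ ≤ b) : 0 ≤ u x₀ := by
  by_contra! hneg
  have hfar : ∀ᶠ x in cocompact ℝ ⊓ 𝓟 (Iic b), u x₀ ≤ u x := by
    rw [cocompact_eq_atBot_atTop, inf_sup_right, eventually_sup]
    refine ⟨(hlim.eventually (Ici_mem_nhds hneg)).filter_mono inf_le_left, ?_⟩
    rw [eventually_inf_principal]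
    filter_upwards [eventually_gt_atTop b] with x hxb hx
    exact absurd hx (not_le.2 hxb)
  obtain ⟨z, hzIic, hmin⟩ := ContinuousOn.exists_isMinOn'
    (fun x hx ↦ (hu x hx).continuousAt.continuousWithinAt) isClosed_Iic hx₀ hfar
  have hz : u z < 0 := (hmin hx₀).trans_lt hneg
  have hzb : z < b := lt_of_le_of_ne hzIic (by rintro rfl; linarith)
  have hloc : IsLocalMin u z := hmin.isLocalMin (Iic_mem_nhds hzb)
  have hderiv : deriv u =ᶠ[𝓝 z] u' :=
    eventually_of_mem (Iic_mem_nhds hzb) fun x hx ↦ (hu x hx).deriv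
  have hu'' : deriv (deriv u) z = u'' z := by
    rw [hderiv.deriv_eq, (hu' z hzb.le).deriv]
  have := hloc.deriv_deriv_nonneg (hu z hzb.le).continuousAt
  nlinarith [hL z hzb.le, hq z hzb.le]

theorem abs_le_of_schrodinger_barrier_Iic {φ φ' φ'' ψ ψ' ψ'' q : ℝ → ℝ} {b : ℝ}
    (hφ : ∀ x ≤ b, HasDerivAt φ (φ' x) x) (hφ' : ∀ x ≤ b, HasDerivAt φ' (φ'' x) x)
    (hψ : ∀ x ≤ b, HasDerivAt ψ (ψ' x) x) (hψ' : ∀ x ≤ b, HasDerivAt ψ' (ψ'' x) x)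
    (hq : ∀ x ≤ b, 0 < q x)
    (hL : ∀ x ≤ b, |-φ'' x + q x * φ x| ≤ -ψ'' x + q x * ψ x)
    (hb : |φ b| ≤ ψ b) (hφlim : Tendsto φ atBot (𝓝 0)) (hψlim : Tendsto ψ atBot (𝓝 0))
    {x : ℝ} (hx : x ≤ b) : |φ x| ≤ ψ x := by
  have hsum := nonneg_of_schrodinger_nonneg_Iic (u := ψ + φ)
    (fun x hx ↦ (hψ x hx).add (hφ x hx)) (fun x hx ↦ (hψ' x hx).add (hφ' x hx)) hq
    (fun x hx ↦ by have := (abs_le.1 (hL x hx)).1; simp only [Pi.add_apply]; linarith)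
    (by simp only [Pi.add_apply]; linarith [neg_abs_le (φ b)])
    (by rw [← add_zero (0 : ℝ)]; exact hψlim.add hφlim) hx
  have hdiff := nonneg_of_schrodinger_nonneg_Iic (u := ψ - φ)
    (fun x hx ↦ (hψ x hx).sub (hφ x hx)) (fun x hx ↦ (hψ' x hx).sub (hφ' x hx)) hq
    (fun x hx ↦ by have := (abs_le.1 (hL x hx)).2; simp only [Pi.sub_apply]; linarith)
    (by simp only [Pi.sub_apply]; linarith [le_abs_self (φ b)])
    (by rw [← sub_zero (0 : ℝ)]; exact hψlim.sub hφlim) hx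
  simp only [Pi.add_apply, Pi.sub_apply] at hsum hdiff
  exact abs_le.2 ⟨by linarith, by linarith⟩

theorem hasDerivAt_neg_rpow (r : ℝ) {x : ℝ} (hx : x < 0) :
    HasDerivAt (fun y : ℝ ↦ (-y) ^ r) (-r * (-x) ^ (r - 1)) x := by
  have := (Real.hasDerivAt_rpow_const (p := r) (Or.inl (neg_ne_zero.2 hx.ne))).comp x
    (hasDerivAt_neg x)
  exact this.congr_deriv (by ring)

theorem mul_rpow_le_schrodinger_neg_rpow {p c C K t Q : ℝ} (hc : 0 ≤ c) (hK : 0 ≤ K)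
    (hCK : 2 * C ≤ c * K) (ht : 1 ≤ t) (hpt : 2 * p * (p + 1) ≤ c * t) (hQ : c * t ≤ Q) :
    C * t ^ (1 - p) ≤ -(-p * (-p - 1) * K * t ^ (-p - 2)) + Q * (K * t ^ (-p)) := by
  have ht₀ : 0 < t := by linarith
  have h₁ : t ^ (1 - p) = t * t ^ (-p) := by
    rw [sub_eq_neg_add, Real.rpow_add ht₀, Real.rpow_one, mul_comm]
  have h₂ : t ^ (-p - 2) = t ^ (-p) / t ^ 2 := by
    rw [Real.rpow_sub ht₀, Real.rpow_two]
  have h₃ : p * (p + 1) / t ^ 2 ≤ c * t / 2 := by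
    rw [div_le_iff₀ (by positivity)]
    nlinarith [mul_le_mul_of_nonneg_left (le_self_pow₀ ht (by norm_num : 3 ≠ 0)) hc]
  have hCt : C * t ≤ c * t / 2 * K := by nlinarith
  rw [h₁, h₂]
  calc C * (t * t ^ (-p)) = C * t * t ^ (-p) := by ring
    _ ≤ c * t / 2 * K * t ^ (-p) := by gcongr
    _ = (c * t - c * t / 2) * (K * t ^ (-p)) := by ring
    _ ≤ (Q - p * (p + 1) / t ^ 2) * (K * t ^ (-p)) := by gcongr
    _ = _ := by ring

theorem abs_le_mul_neg_rpow_of_schrodinger_le {φ q : ℝ → ℝ} {p c C K b : ℝ} (hp : 0 < p)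
    (hc : 0 < c) (hφ : ContDiff ℝ 2 φ) (hlim : Tendsto φ atBot (𝓝 0)) (hb : b ≤ -1)
    (hbp : 2 * p * (p + 1) ≤ c * -b) (hq : ∀ y ≤ b, c * -y ≤ q y)
    (hL : ∀ y ≤ b, |-deriv (deriv φ) y + q y * φ y| ≤ C * (-y) ^ (1 - p))
    (hCK : 2 * C ≤ c * K) (hbK : |φ b| * (-b) ^ p ≤ K) {x : ℝ} (hx : x ≤ b) :
    |φ x| ≤ K * (-x) ^ (-p) := by
  have hb₀ : 0 < -b := by linarith
  have hK : 0 ≤ K := le_trans (by positivity) hbK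
  refine abs_le_of_schrodinger_barrier_Iic (q := q) (ψ := fun y ↦ K * (-y) ^ (-p))
    (ψ' := fun y ↦ K * p * (-y) ^ (-p - 1)) (ψ'' := fun y ↦ -p * (-p - 1) * K * (-y) ^ (-p - 2))
    (fun y _ ↦ (hφ.differentiable (by norm_num) y).hasDerivAt)
    (fun y _ ↦ (hφ.differentiable_deriv_two y).hasDerivAt)
    (fun y hy ↦ ((hasDerivAt_neg_rpow (-p) (by linarith)).const_mul K).congr_deriv (by ring))
    (fun y hy ↦ ((hasDerivAt_neg_rpow (-p - 1) (by linarith)).const_mul (K * p)).congr_deriv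
      (by ring_nf)) (fun y hy ↦ ?_) (fun y hy ↦ ?_) ?_ hlim ?_ hx
  · nlinarith [hq y hy]
  · exact (hL y hy).trans <| mul_rpow_le_schrodinger_neg_rpow hc.le hK hCK (by linarith)
      (hbp.trans (by gcongr)) (hq y hy)
  · rwa [Real.rpow_neg hb₀.le, ← div_eq_mul_inv, le_div_iff₀ (by positivity)]
  · simpa using ((tendsto_rpow_neg_atTop hp).comp tendsto_neg_atBot_atTop).const_mul K

theorem stmt0_general (φ q : ℝ → ℝ) (α c : ℝ) (hα : 0 < α) (hc : 0 < c)
    (hφ : ContDiff ℝ 2 φ)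
    (hO : ∃ C > (0:ℝ), ∃ X : ℝ, ∀ x ≤ X, |(-(deriv (deriv φ) x)) + q x * φ x| ≤ C * |x| ^ (-α))
    (hlim : Tendsto φ atBot (nhds 0))
    (hqc : ∃ X : ℝ, ∀ x ≤ X, c * |x| ≤ q x) :
    ∃ C > (0:ℝ), ∃ X : ℝ, ∀ x ≤ X, |φ x| ≤ C * |x| ^ (-(α + 1)) := by
  obtain ⟨C, hC, X₁, hX₁⟩ := hO
  obtain ⟨X₂, hX₂⟩ := hqc
  set p := α + 1
  set b := min (min X₁ X₂) (min (-1) (-(2 * p * (p + 1) / c)))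
  have hbX₁ : b ≤ X₁ := (min_le_left _ _).trans (min_le_left _ _)
  have hbX₂ : b ≤ X₂ := (min_le_left _ _).trans (min_le_right _ _)
  have hb₁ : b ≤ -1 := (min_le_right _ _).trans (min_le_left _ _)
  have hbp : 2 * p * (p + 1) ≤ c * -b := by
    have : b ≤ -(2 * p * (p + 1) / c) := (min_le_right _ _).trans (min_le_right _ _)
    rw [← div_le_iff₀' hc]; linarith
  set K := max (2 * C / c) (|φ b| * (-b) ^ p)
  refine ⟨K, lt_max_of_lt_left (by positivity), b, fun x hx ↦ ?_⟩
  have habs : ∀ y ≤ b, |y| = -y := fun y hy ↦ abs_of_neg (by linarith)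
  rw [habs x hx]
  refine abs_le_mul_neg_rpow_of_schrodinger_le (by positivity) hc hφ hlim hb₁ hbp
    (fun y hy ↦ habs y hy ▸ hX₂ y (hy.trans hbX₂))
    (fun y hy ↦ by rw [show 1 - p = -α by ring, ← habs y hy]; exact hX₁ y (hy.trans hbX₁))
    ?_ (le_max_right _ _) hx
  rw [← div_le_iff₀' hc]
  exact le_max_left _ _

/-- Barrier lemma: if `-φ'' + qφ = O(|x|^{-α})` as `x → -∞`, `φ → 0` at `-∞`, and
`q(x) ≥ c|x|` for sufficiently negative `x`, then `φ = O(|x|^{-α-1})` as `x → -∞`. -/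
theorem stmt0 (φ q : ℝ → ℝ) (α c : ℝ) (hα : 0 < α) (hc : 0 < c)
    (hφ : ContDiff ℝ 2 φ) (hq : Continuous q)
    (hO : ∃ C > (0:ℝ), ∃ X : ℝ, ∀ x ≤ X, |(-(deriv (deriv φ) x)) + q x * φ x| ≤ C * |x| ^ (-α))
    (hlim : Tendsto φ atBot (nhds 0))
    (hqc : ∃ X : ℝ, ∀ x ≤ X, c * |x| ≤ q x) :
    ∃ C > (0:ℝ), ∃ X : ℝ, ∀ x ≤ X, |φ x| ≤ C * |x| ^ (-(α + 1)) :=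
  stmt0_general φ q α c hα hc hφ hO hlim hqc
end

section
/- Let V : ℝ → ℝ be a C² solution of V'' = V(V² + x) on ℝ with V > 0, V(x) - √(-x) → 0 as x → -∞, and V(x) → 0 as x → +∞. Then ∫_{-∞}^0 (V²(x) + x) dx + ∫_0^∞ V²(x) dx = 0, where both improper integrals converge absolutely (assuming V(x) - √(-x) = O(|x|^{-5/2}) as x → -∞ and V decays superexponentially as x → +∞). -/
open Filter MeasureTheory

open Set Asymptotics Topology Real

/-!
Multiplying the equation by `V'` gives two exact derivatives,
`(V'² - (V² + x)² / 2)' = -(V² + x)` and `(V'² - V⁴ / 2 - x V²)' = -V²`,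
and the two primitives agree at `0`. So the claim says that the first one tends to `0` at `-∞`
and the second one at `+∞`. Each has a limit, since its derivative is integrable, and the terms
besides `V'²` tend to `0`; hence `V'²` has a limit at `±∞`. By the mean value theorem that limit
is `0`, because `V (x + 1) - V x → 0` at both ends.
-/

lemma exists_hasDerivAt_eq_sub_add_one {f f' : ℝ → ℝ} (hf : ∀ x, HasDerivAt f (f' x) x) :
    ∃ ξ : ℝ → ℝ, (∀ x, ξ x ∈ Ioo x (x + 1)) ∧ ∀ x, f' (ξ x) = f (x + 1) - f x := by
  have key : ∀ x, ∃ y ∈ Ioo x (x + 1), f' y = f (x + 1) - f x := fun x => by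
    obtain ⟨y, hy, h⟩ := exists_hasDerivAt_eq_slope f f' (lt_add_one x)
      (fun y _ => (hf y).continuousAt.continuousWithinAt) (fun y _ => hf y)
    exact ⟨y, hy, by rw [h, add_sub_cancel_left, div_one]⟩
  choose ξ hξ hf'ξ using key
  exact ⟨ξ, hξ, hf'ξ⟩

lemma eq_zero_of_tendsto_sq_atTop {f f' : ℝ → ℝ} {L : ℝ} (hf : ∀ x, HasDerivAt f (f' x) x)
    (hinc : Tendsto (fun x => f (x + 1) - f x) atTop (𝓝 0))
    (hL : Tendsto (fun x => f' x ^ 2) atTop (𝓝 L)) : L = 0 := by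
  obtain ⟨ξ, hξ, hf'ξ⟩ := exists_hasDerivAt_eq_sub_add_one hf
  have hξ_top : Tendsto ξ atTop atTop := tendsto_atTop_mono (fun x => (hξ x).1.le) tendsto_id
  refine tendsto_nhds_unique (hL.comp hξ_top) ?_
  simpa [Function.comp_def, hf'ξ] using hinc.pow 2

lemma eq_zero_of_tendsto_sq_atBot {f f' : ℝ → ℝ} {L : ℝ} (hf : ∀ x, HasDerivAt f (f' x) x)
    (hinc : Tendsto (fun x => f (x + 1) - f x) atBot (𝓝 0))
    (hL : Tendsto (fun x => f' x ^ 2) atBot (𝓝 L)) : L = 0 := by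
  obtain ⟨ξ, hξ, hf'ξ⟩ := exists_hasDerivAt_eq_sub_add_one hf
  have hξ_bot : Tendsto ξ atBot atBot :=
    tendsto_atBot_mono (fun x => (hξ x).2.le) (tendsto_atBot_add_const_right _ 1 tendsto_id)
  refine tendsto_nhds_unique (hL.comp hξ_bot) ?_
  simpa [Function.comp_def, hf'ξ] using hinc.pow 2

lemma tendsto_sqrt_add_one_sub_sqrt_atTop : Tendsto (fun t => √(t + 1) - √t) atTop (𝓝 0) := by
  refine squeeze_zero' ?_ ?_ (tendsto_inv_atTop_zero.comp
    (tendsto_sqrt_atTop.comp (tendsto_atTop_add_const_right _ 1 tendsto_id)))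
  · filter_upwards with t
    exact sub_nonneg.2 (Real.sqrt_le_sqrt (by linarith))
  · filter_upwards [eventually_ge_atTop 0] with t ht
    have ha := Real.sq_sqrt (show 0 ≤ t + 1 by linarith)
    have hb := Real.sq_sqrt ht
    have hab : √t ≤ √(t + 1) := Real.sqrt_le_sqrt (by linarith)
    have hpos : 0 < √(t + 1) := Real.sqrt_pos.2 (by linarith)
    show √(t + 1) - √t ≤ (√(t + 1))⁻¹
    rw [← one_div, le_div_iff₀ hpos]
    nlinarith [Real.sqrt_nonneg t]

lemma tendsto_sub_add_one_of_tendsto_sub_sqrt {f : ℝ → ℝ}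
    (hf : Tendsto (fun x => f x - √(-x)) atBot (𝓝 0)) :
    Tendsto (fun x => f (x + 1) - f x) atBot (𝓝 0) := by
  have hshift := hf.comp (tendsto_atBot_add_const_right _ 1 tendsto_id)
  have hsqrt := tendsto_sqrt_add_one_sub_sqrt_atTop.comp
    (tendsto_neg_atBot_atTop.comp (tendsto_atBot_add_const_right _ 1 tendsto_id))
  have := (hshift.sub hf).sub hsqrt
  rw [sub_zero, sub_zero] at this
  refine this.congr fun x => ?_
  simp only [Function.comp_apply, id]
  rw [show -(x + 1) + 1 = -x by ring]
  ring

lemma isBigO_sq_add_self_atBot {V : ℝ → ℝ}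
    (h : (fun x => V x - √(-x)) =O[atBot] fun x => |x| ^ (-(5 : ℝ) / 2)) :
    (fun x => V x ^ 2 + x) =O[atBot] fun x => |x| ^ (-2 : ℝ) := by
  have hsqrt : (fun x => √(-x)) =O[atBot] fun x => |x| ^ ((1 : ℝ) / 2) := by
    refine (isBigO_refl _ _).congr' EventuallyEq.rfl ?_
    filter_upwards [eventually_le_atBot 0] with x hx
    rw [abs_of_nonpos hx, Real.sqrt_eq_rpow]
  have hsmall : (fun x : ℝ => |x| ^ (-(5 : ℝ) / 2)) =O[atBot] fun x => |x| ^ ((1 : ℝ) / 2) := by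
    refine IsBigO.of_bound 1 ?_
    filter_upwards [eventually_le_atBot (-1)] with x hx
    have h1 : 1 ≤ |x| := by rw [abs_of_neg (by linarith)]; linarith
    simp only [Real.norm_eq_abs, abs_of_nonneg (Real.rpow_nonneg (abs_nonneg x) _), one_mul]
    exact Real.rpow_le_rpow_of_exponent_le h1 (by norm_num)
  refine (h.mul ((h.trans hsmall).add (hsqrt.const_mul_left 2))).congr' ?_ ?_
  · filter_upwards [eventually_le_atBot 0] with x hx
    have := Real.sq_sqrt (neg_nonneg.2 hx)
    linear_combination -this
  · filter_upwards [eventually_lt_atBot 0] with x hx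
    rw [← Real.rpow_add (abs_pos.2 hx.ne)]
    norm_num

lemma integrableAtFilter_abs_rpow_atBot {s : ℝ} (hs : s < -1) :
    IntegrableAtFilter (fun x : ℝ => |x| ^ s) atBot := by
  refine ⟨Iio (-1), Iio_mem_atBot _, ?_⟩
  have hIoi : IntegrableOn (fun x : ℝ => |x| ^ s) (Ioi 1) :=
    (integrableOn_Ioi_rpow_of_lt hs one_pos).congr_fun
      (fun x hx => by rw [abs_of_pos (one_pos.trans hx)]) measurableSet_Ioi
  have := (Measure.measurePreserving_neg (volume : Measure ℝ)).integrableOn_comp_preimage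
    (Homeomorph.neg ℝ).measurableEmbedding (f := fun x : ℝ => |x| ^ s) (s := Iio (-1))
  exact this.1 (by simpa [Function.comp_def] using hIoi)

lemma isBigO_exp_neg_mul_of_le_exp_neg_rpow {f : ℝ → ℝ} {c C p : ℝ} (hc : 0 ≤ c) (hC : 0 ≤ C)
    (hp : 1 ≤ p) (hf0 : ∀ x, 0 ≤ f x) (hf : ∀ x ≥ 0, f x ≤ C * exp (-c * x ^ p)) :
    f =O[atTop] fun x => exp (-c * x) := by
  refine IsBigO.of_bound C ?_
  filter_upwards [eventually_ge_atTop 1] with x hx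
  rw [Real.norm_of_nonneg (hf0 x), Real.norm_of_nonneg (exp_pos _).le]
  calc f x ≤ C * exp (-c * x ^ p) := hf x (by linarith)
    _ ≤ C * exp (-c * x) := by
      simp only [neg_mul]
      gcongr
      exact Real.self_le_rpow_of_one_le hx hp

section PainleveII

variable {V W : ℝ → ℝ}

lemma hasDerivAt_energy_atBot (hV : ∀ x, HasDerivAt V (W x) x)
    (hW : ∀ x, HasDerivAt W (V x * (V x ^ 2 + x)) x) (x : ℝ) :
    HasDerivAt (fun y => W y ^ 2 - (V y ^ 2 + y) ^ 2 / 2) (-(V x ^ 2 + x)) x := by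
  have h := ((hW x).fun_pow 2).fun_sub
    ((((hV x).fun_pow 2).fun_add (hasDerivAt_id' x)).fun_pow 2 |>.div_const 2)
  refine h.congr_deriv ?_
  norm_num
  ring

lemma hasDerivAt_energy_atTop (hV : ∀ x, HasDerivAt V (W x) x)
    (hW : ∀ x, HasDerivAt W (V x * (V x ^ 2 + x)) x) (x : ℝ) :
    HasDerivAt (fun y => W y ^ 2 - V y ^ 4 / 2 - y * V y ^ 2) (-V x ^ 2) x := by
  have h := (((hW x).fun_pow 2).fun_sub (((hV x).fun_pow 4).div_const 2)).fun_sub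
    ((hasDerivAt_id' x).fun_mul ((hV x).fun_pow 2))
  refine h.congr_deriv ?_
  norm_num
  ring

lemma integral_Iic_sq_add_self (hV : ∀ x, HasDerivAt V (W x) x)
    (hW : ∀ x, HasDerivAt W (V x * (V x ^ 2 + x)) x)
    (hint : IntegrableOn (fun x => V x ^ 2 + x) (Iic 0))
    (hlim : Tendsto (fun x => V x ^ 2 + x) atBot (𝓝 0))
    (hinc : Tendsto (fun x => V (x + 1) - V x) atBot (𝓝 0)) :
    ∫ x in Iic 0, (V x ^ 2 + x) = V 0 ^ 4 / 2 - W 0 ^ 2 := by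
  set F := fun y => W y ^ 2 - (V y ^ 2 + y) ^ 2 / 2
  have hF : ∀ x ∈ Iic (0 : ℝ), HasDerivAt F (-(V x ^ 2 + x)) x :=
    fun x _ => hasDerivAt_energy_atBot hV hW x
  have hFlim := tendsto_limUnder_of_hasDerivAt_of_integrableOn_Iic hF hint.neg
  have hWsq : Tendsto (fun x => W x ^ 2) atBot (𝓝 (limUnder atBot F)) := by
    simpa [F] using hFlim.add ((hlim.pow 2).div_const 2)
  rw [eq_zero_of_tendsto_sq_atBot hV hinc hWsq] at hFlim
  have := integral_Iic_of_hasDerivAt_of_tendsto' hF hint.neg hFlim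
  rw [integral_neg] at this
  simp only [F] at this
  linarith

lemma integral_Ioi_sq (hV : ∀ x, HasDerivAt V (W x) x)
    (hW : ∀ x, HasDerivAt W (V x * (V x ^ 2 + x)) x)
    (hint : IntegrableOn (fun x => V x ^ 2) (Ioi 0))
    (hlim : Tendsto V atTop (𝓝 0)) (hmul : Tendsto (fun x => x * V x ^ 2) atTop (𝓝 0)) :
    ∫ x in Ioi 0, V x ^ 2 = W 0 ^ 2 - V 0 ^ 4 / 2 := by
  set G := fun y => W y ^ 2 - V y ^ 4 / 2 - y * V y ^ 2
  have hG : ∀ x ∈ Ici (0 : ℝ), HasDerivAt G (-V x ^ 2) x :=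
    fun x _ => hasDerivAt_energy_atTop hV hW x
  have hGlim := tendsto_limUnder_of_hasDerivAt_of_integrableOn_Ioi
    (fun x hx => hG x (mem_Ici_of_Ioi hx)) hint.neg
  have hinc : Tendsto (fun x => V (x + 1) - V x) atTop (𝓝 0) := by
    simpa using (hlim.comp (tendsto_atTop_add_const_right _ 1 tendsto_id)).sub hlim
  have hWsq : Tendsto (fun x => W x ^ 2) atTop (𝓝 (limUnder atTop G)) := by
    simpa [G, sub_add_cancel] using (hGlim.add hmul).add ((hlim.pow 4).div_const 2)
  rw [eq_zero_of_tendsto_sq_atTop hV hinc hWsq] at hGlim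
  have := integral_Ioi_of_hasDerivAt_of_tendsto' hG hint.neg hGlim
  rw [integral_neg] at this
  simp only [G] at this
  linarith

end PainleveII

/-- For the Hastings–McLeod solution `V` of Painlevé-II,
`∫_{-∞}^0 (V² + x) dx + ∫_0^∞ V² dx = 0`, both integrals being absolutely convergent. -/
theorem stmt1 (V : ℝ → ℝ)
    (hV : ContDiff ℝ 2 V)
    (heq : ∀ x, deriv (deriv V) x = V x * (V x ^ 2 + x))
    (hpos : ∀ x, 0 < V x)
    (hbot : Tendsto (fun x => V x - Real.sqrt (-x)) atBot (nhds 0))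
    (htop : Tendsto V atTop (nhds 0))
    (hO : ∃ C > (0:ℝ), ∃ X : ℝ, ∀ x ≤ X, |V x - Real.sqrt (-x)| ≤ C * |x| ^ (-(5:ℝ)/2))
    (hsup : ∃ c > (0:ℝ), ∃ C > (0:ℝ), ∀ x ≥ (0:ℝ), V x ≤ C * Real.exp (-c * x ^ ((3:ℝ)/2))) :
    IntegrableOn (fun x => V x ^ 2 + x) (Set.Iic 0) ∧
    IntegrableOn (fun x => V x ^ 2) (Set.Ici 0) ∧
    (∫ x in Set.Iic (0:ℝ), (V x ^ 2 + x)) + (∫ x in Set.Ici (0:ℝ), V x ^ 2) = 0 := by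
  obtain ⟨C, -, X, hX⟩ := hO
  obtain ⟨c, hc, C', hC', hV_le⟩ := hsup
  have hV' : ∀ x, HasDerivAt V (deriv V x) x :=
    fun x => (hV.differentiable (by norm_num) x).hasDerivAt
  have hV'' : ∀ x, HasDerivAt (deriv V) (V x * (V x ^ 2 + x)) x :=
    fun x => heq x ▸ (hV.differentiable_deriv_two x).hasDerivAt
  have hbigO : (fun x => V x ^ 2 + x) =O[atBot] fun x => |x| ^ (-2 : ℝ) := by
    refine isBigO_sq_add_self_atBot (IsBigO.of_bound C ?_)
    filter_upwards [eventually_le_atBot X] with x hx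
    simpa [abs_of_nonneg (Real.rpow_nonneg (abs_nonneg x) _)] using hX x hx
  have hIic : IntegrableOn (fun x => V x ^ 2 + x) (Iic 0) :=
    (((hV.continuous.pow 2).add continuous_id).continuousOn.locallyIntegrableOn measurableSet_Iic)
      |>.integrableOn_of_isBigO_atBot hbigO (integrableAtFilter_abs_rpow_atBot (by norm_num))
  have hlim : Tendsto (fun x => V x ^ 2 + x) atBot (𝓝 0) :=
    hbigO.trans_tendsto ((tendsto_rpow_neg_atTop two_pos).comp tendsto_abs_atBot_atTop)
  have hsq : (fun x => V x ^ 2) =O[atTop] fun x => exp (-c * x) := by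
    simpa [sq] using (isBigO_exp_neg_mul_of_le_exp_neg_rpow hc.le hC'.le (by norm_num)
      (fun x => (hpos x).le) hV_le).mul (htop.isBigO_one ℝ)
  have hIoi : IntegrableOn (fun x => V x ^ 2) (Ioi 0) :=
    integrable_of_isBigO_exp_neg hc (hV.continuous.pow 2).continuousOn hsq
  have hmul : Tendsto (fun x => x * V x ^ 2) atTop (𝓝 0) :=
    ((isBigO_refl (fun x : ℝ => x) atTop).mul hsq).trans_tendsto
      (by simpa using tendsto_rpow_mul_exp_neg_mul_atTop_nhds_zero 1 c hc)
  refine ⟨hIic, (integrableOn_Ici_iff_integrableOn_Ioi (by finiteness)).2 hIoi, ?_⟩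
  rw [integral_Ici_eq_integral_Ioi, integral_Ioi_sq hV' hV'' hIoi htop hmul,
    integral_Iic_sq_add_self hV' hV'' hIic hlim (tendsto_sub_add_one_of_tendsto_sub_sqrt hbot)]
  ring
end

section
/- Let V : ℝ → ℝ be a positive C² solution of V'' = V(V² + x) with V' < 0 on ℝ. Then for every φ ∈ C_c^∞(ℝ), ∫_{-∞}^∞ [ (φ')² + (3V² + x) φ² ] dx ≥ c ∫_{-∞}^∞ φ² dx for some constant c > 0 independent of φ; that is, the linearized operator -M, M(φ) = φ'' - (3V²(x)+x)φ, has strictly positive quadratic form on C_c^∞. -/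
set_option maxHeartbeats 1000000

open Filter MeasureTheory Set

private lemma hm_integral_deriv_zero {F E : ℝ → ℝ}
    (hderiv : ∀ x, HasDerivAt F (E x) x) (hE : Continuous E)
    (hFc : Continuous F) (hsupp : HasCompactSupport F) (hsuppE : HasCompactSupport E) :
    ∫ x, E x = 0 :=
  integral_eq_zero_of_hasDerivAt_of_integrable hderiv
    (hE.integrable_of_hasCompactSupport hsuppE)
    (hFc.integrable_of_hasCompactSupport hsupp)

private lemma hm_d3 {V : ℝ → ℝ} (hV : ContDiff ℝ 2 V)
    (heq : ∀ x, deriv (deriv V) x = V x * (V x ^ 2 + x)) :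
    ∀ x, HasDerivAt (deriv (deriv V)) (deriv V x * (3 * V x ^ 2 + x) + V x) x := by
  intro x
  have h1 : Differentiable ℝ V := hV.differentiable (by norm_num)
  have h2 : Differentiable ℝ (deriv V) :=
    (((contDiff_succ_iff_deriv (n := 1)).1 hV).2.2).differentiable one_ne_zero
  have hfun : deriv (deriv V) = fun y => V y * (V y ^ 2 + y) := funext heq
  rw [hfun]
  have hVx : HasDerivAt V (deriv V x) x := (h1 x).hasDerivAt
  have : HasDerivAt (fun y => V y * (V y ^ 2 + y))
      (deriv V x * (V x ^ 2 + x) + V x * (2 * V x ^ 1 * deriv V x + 1)) x := by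
    exact hVx.mul (((hVx.pow 2)).add (hasDerivAt_id x))
  convert this using 1
  ring


private lemma hm_step {V : ℝ → ℝ} (hV : ContDiff ℝ 2 V)
    (heq : ∀ x, deriv (deriv V) x = V x * (V x ^ 2 + x))
    (hpos : ∀ x, 0 < V x) (hdec : ∀ x, deriv V x < 0)
    {K : ℝ} (hK1 : 1 ≤ K) (hK2 : 64 / (V 0) ^ 2 ≤ K) :
    ∀ x, V x ^ 2 + x ≤ -K → V (x + K) ^ 2 + (x + K) ≤ -K := by
  have h1 : Differentiable ℝ V := hV.differentiable (by norm_num)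
  have h2 : ContDiff ℝ 1 (deriv V) := ((contDiff_succ_iff_deriv (n := 1)).1 hV).2.2
  have hd2 : Differentiable ℝ (deriv V) := h2.differentiable one_ne_zero
  set v₀ := V 0 with hv₀def
  have hv₀ : 0 < v₀ := hpos 0
  have hK0 : 0 < K := lt_of_lt_of_le one_pos hK1
  have anti : Antitone V := (strictAnti_of_deriv_neg hdec).antitone
  have sqanti : ∀ {s t : ℝ}, s ≤ t → V t ^ 2 ≤ V s ^ 2 := fun {s t} h =>
    pow_le_pow_left₀ (hpos t).le (anti h) 2
  intro x hx
  have hVx2 : 0 < V x ^ 2 := pow_pos (hpos x) 2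
  have hxK : x + K ≤ -V x ^ 2 := by linarith
  have hxK0 : x + K ≤ 0 := by linarith
  -- (ii) deriv V (x + K/2) ≤ -(v₀*K^2/4)
  have hg : ∀ t, HasDerivAt (fun s => deriv V s + (v₀ * K / 2) * s)
      (V t * (V t ^ 2 + t) + v₀ * K / 2) t := by
    intro t
    have := ((hd2 t).hasDerivAt.add ((hasDerivAt_id t).const_mul (v₀ * K / 2)))
    rw [heq t] at this
    simpa [mul_comm, Pi.add_def] using this
  have hantig : AntitoneOn (fun s => deriv V s + (v₀ * K / 2) * s) (Icc x (x + K / 2)) := by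
    apply antitoneOn_of_deriv_nonpos (convex_Icc _ _)
    · exact fun t _ => ((hg t).continuousAt).continuousWithinAt
    · exact fun t _ => ((hg t).differentiableAt).differentiableWithinAt
    · intro t ht
      rw [interior_Icc, mem_Ioo] at ht
      rw [(hg t).deriv]
      have ht0 : t ≤ 0 := by linarith
      have hVt : v₀ ≤ V t := anti ht0
      have hst : V t ^ 2 + t ≤ -(K / 2) := by
        have := sqanti ht.1.le
        linarith
      have : V t * (V t ^ 2 + t) ≤ v₀ * (V t ^ 2 + t) :=
        mul_le_mul_of_nonpos_right hVt (by linarith)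
      have : v₀ * (V t ^ 2 + t) ≤ v₀ * (-(K / 2)) :=
        mul_le_mul_of_nonneg_left hst hv₀.le
      nlinarith [mul_le_mul_of_nonpos_right hVt (show V t ^ 2 + t ≤ 0 by linarith)]
  have h2a : deriv V (x + K / 2) ≤ -(v₀ * K ^ 2 / 4) := by
    have hmem1 : x ∈ Icc x (x + K / 2) := ⟨le_refl x, by linarith⟩
    have hmem2 : x + K / 2 ∈ Icc x (x + K / 2) := ⟨by linarith, le_refl _⟩
    have := hantig hmem1 hmem2 (by linarith)
    have hdx := hdec x
    nlinarith
  -- (iii) deriv V t ≤ -(v₀*K^2/4) on [x+K/2, x+K]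
  have hanti2 : AntitoneOn (deriv V) (Icc (x + K / 2) (x + K)) := by
    apply antitoneOn_of_deriv_nonpos (convex_Icc _ _)
    · exact (h2.continuous).continuousOn
    · exact fun t _ => (hd2 t).differentiableWithinAt
    · intro t ht
      rw [interior_Icc, mem_Ioo] at ht
      rw [heq t]
      have hst : V t ^ 2 + t ≤ 0 := by
        have := sqanti (show x ≤ t by linarith)
        linarith
      exact mul_nonpos_of_nonneg_of_nonpos (hpos t).le hst
  have h3 : ∀ t ∈ Icc (x + K / 2) (x + K), deriv V t ≤ -(v₀ * K ^ 2 / 4) := by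
    intro t ht
    have := hanti2 (left_mem_Icc.2 (by linarith)) ht ht.1
    linarith
  -- (iv) V (x+K) ≤ V (x+K/2) - (v₀*K^2/4) * (K/2)
  have hanti3 : AntitoneOn (fun s => V s + (v₀ * K ^ 2 / 4) * s) (Icc (x + K / 2) (x + K)) := by
    apply antitoneOn_of_deriv_nonpos (convex_Icc _ _)
    · exact (h1.continuous.add (continuous_const.mul continuous_id)).continuousOn
    · exact fun t _ => ((h1 t).add ((differentiable_id t).const_mul _)).differentiableWithinAt
    · intro t ht
      rw [interior_Icc] at ht
      have hder := (h1 t).hasDerivAt.add ((hasDerivAt_id t).const_mul (v₀ * K ^ 2 / 4))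
      simp only [id_eq, mul_one, Pi.add_def] at hder
      rw [show (fun s => V s + v₀ * K ^ 2 / 4 * s) = fun x => V x + v₀ * K ^ 2 / 4 * x from rfl,
        hder.deriv]
      have := h3 t (Ioo_subset_Icc_self ht)
      linarith
  have h4 : V (x + K) ≤ V x - v₀ * K ^ 2 / 4 * (K / 2) := by
    have hmem1 : x + K / 2 ∈ Icc (x + K / 2) (x + K) := ⟨le_refl _, by linarith⟩
    have hmem2 : x + K ∈ Icc (x + K / 2) (x + K) := ⟨by linarith, le_refl _⟩
    have hend := hanti3 hmem1 hmem2 (by linarith)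
    have hmono : V (x + K / 2) ≤ V x := anti (by linarith)
    simp only at hend
    nlinarith
  -- (v)+(vi)
  have h6 : 0 < V (x + K) := hpos _
  have hb : v₀ * K ^ 2 / 4 * (K / 2) < V x := by nlinarith
  have hsq : V (x + K) ^ 2 ≤ (V x - v₀ * K ^ 2 / 4 * (K / 2)) ^ 2 :=
    pow_le_pow_left₀ h6.le h4 2
  have hK2' : 64 ≤ v₀ ^ 2 * K := by
    rw [div_le_iff₀ (by positivity)] at hK2
    linarith [hK2]
  have hc2 : K ≤ (v₀ * K ^ 2 / 4 * (K / 2)) ^ 2 := by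
    have hK4 : (1:ℝ) ≤ K ^ 4 := one_le_pow₀ hK1
    have hK5 : K ≤ K ^ 5 := by nlinarith
    have e2 : 64 * K ^ 5 ≤ v₀ ^ 2 * K * K ^ 5 :=
      mul_le_mul_of_nonneg_right hK2' (pow_pos hK0 5).le
    nlinarith
  have hcpos : 0 ≤ v₀ * K ^ 2 / 4 * (K / 2) := by positivity
  nlinarith [hsq, hx, hc2, mul_le_mul_of_nonneg_left hb.le hcpos]


private lemma hm_lower {V : ℝ → ℝ} (hV : ContDiff ℝ 2 V)
    (heq : ∀ x, deriv (deriv V) x = V x * (V x ^ 2 + x))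
    (hpos : ∀ x, 0 < V x) (hdec : ∀ x, deriv V x < 0) :
    ∃ K : ℝ, 1 ≤ K ∧ ∀ x, -K - x ≤ V x ^ 2 := by
  set K := max 1 (64 / (V 0) ^ 2) with hKdef
  have hK1 : 1 ≤ K := le_max_left _ _
  have hK2 : 64 / (V 0) ^ 2 ≤ K := le_max_right _ _
  have hK0 : 0 < K := lt_of_lt_of_le one_pos hK1
  refine ⟨K, hK1, fun x => ?_⟩
  by_contra hcon
  push_neg at hcon
  have hx : V x ^ 2 + x ≤ -K := by linarith
  have key : ∀ n : ℕ, V (x + n * K) ^ 2 + (x + n * K) ≤ -K := by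
    intro n
    induction n with
    | zero => simpa using hx
    | succ n ih =>
        have := hm_step hV heq hpos hdec hK1 hK2 _ ih
        have harg : x + (n : ℝ) * K + K = x + ((n : ℝ) + 1) * K := by ring
        rw [harg] at this
        simpa [Nat.cast_succ] using this
  obtain ⟨n, hn⟩ := exists_nat_gt ((-x) / K)
  have hnK : -x < n * K := by
    rw [div_lt_iff₀ hK0] at hn
    linarith
  have := key n
  nlinarith [pow_pos (hpos (x + n * K)) 2]

private lemma hm_main (V : ℝ → ℝ) (hV : ContDiff ℝ 2 V)
    (heq : ∀ x, deriv (deriv V) x = V x * (V x ^ 2 + x))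
    (hpos : ∀ x, 0 < V x) (hdec : ∀ x, deriv V x < 0)
    (hm_lower' : ∃ K : ℝ, 1 ≤ K ∧ ∀ x, -K - x ≤ V x ^ 2)
    (hm_d3' : ∀ x, HasDerivAt (deriv (deriv V)) (deriv V x * (3 * V x ^ 2 + x) + V x) x) :
    ∃ c > (0:ℝ), ∀ φ : ℝ → ℝ, ContDiff ℝ (⊤ : ℕ∞) φ → HasCompactSupport φ →
      c * ∫ x, (φ x) ^ 2 ≤ ∫ x, ((deriv φ x) ^ 2 + (3 * (V x) ^ 2 + x) * (φ x) ^ 2) := by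
  obtain ⟨K, hK1, hKlow⟩ := hm_lower'
  have h1 : Differentiable ℝ V := hV.differentiable (by norm_num)
  have h2 : ContDiff ℝ 1 (deriv V) := ((contDiff_succ_iff_deriv (n := 1)).1 hV).2.2
  have hd2 : Differentiable ℝ (deriv V) := h2.differentiable one_ne_zero
  have hcV : Continuous V := h1.continuous
  have hcV' : Continuous (deriv V) := h2.continuous
  -- w and its derivatives
  set w : ℝ → ℝ := fun t => -deriv V t with hwdef
  have hwpos : ∀ t, 0 < w t := fun t => neg_pos.2 (hdec t)
  have hwne : ∀ t, w t ≠ 0 := fun t => (hwpos t).ne'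
  have hcw : Continuous w := hcV'.neg
  set w1 : ℝ → ℝ := fun t => -(V t * (V t ^ 2 + t)) with hw1def
  have hcw1 : Continuous w1 := ((hcV.mul ((hcV.pow 2).add continuous_id)).neg)
  have hdw : ∀ t, HasDerivAt w (w1 t) t := by
    intro t
    have := ((hd2 t).hasDerivAt).neg
    rw [heq t] at this
    exact this
  have hdw1 : ∀ t, HasDerivAt w1 (-(deriv V t * (3 * V t ^ 2 + t) + V t)) t := by
    intro t
    have hfun : w1 = fun s => -(deriv (deriv V) s) := by
      funext s; rw [hw1def, heq s]
    rw [hfun]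
    exact (hm_d3' t).neg
  -- the function ρ = V / w and constants
  set ρ : ℝ → ℝ := fun t => V t / w t with hρdef
  have hcρ : Continuous ρ := hcV.div hcw hwne
  have hρpos : ∀ t, 0 < ρ t := fun t => div_pos (hpos t) (hwpos t)
  set A : ℝ := (3 * K + 1) / 2 with hAdef
  have hAle : -A ≤ (1:ℝ) := by rw [hAdef]; linarith
  have hJne : (Icc (-A) (1:ℝ)).Nonempty := nonempty_Icc.2 hAle
  obtain ⟨xm, hxmJ, hxm⟩ := isCompact_Icc.exists_isMinOn hJne hcρ.continuousOn
  obtain ⟨xq, hxqJ, hxq⟩ := isCompact_Icc.exists_isMinOn hJne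
    (Continuous.continuousOn (by continuity : Continuous (fun t : ℝ => 3 * V t ^ 2 + t)))
  set m : ℝ := ρ xm with hmdef
  have hm : 0 < m := hρpos xm
  set Q : ℝ := 1 + |3 * V xq ^ 2 + xq| with hQdef
  have hQ1 : 1 ≤ Q := by
    rw [hQdef]; linarith [abs_nonneg (3 * V xq ^ 2 + xq)]
  have hQ0 : 0 < Q := lt_of_lt_of_le one_pos hQ1
  set ε : ℝ := min (1/2) (m / (2 * Q)) with hεdef
  have hε0 : 0 < ε := lt_min (by norm_num) (div_pos hm (by positivity))
  have hε1 : ε ≤ 1/2 := min_le_left _ _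
  have hε2 : ε ≤ m / (2 * Q) := min_le_right _ _
  set c : ℝ := min (m / (2 * Q)) ε with hcdef
  have hc : 0 < c := lt_min (div_pos hm (by positivity)) hε0
  have hcε : c ≤ ε := min_le_right _ _
  have hcm : c ≤ m / (2 * Q) := min_le_left _ _
  -- pointwise lower bound for (1-ε)ρ + ε q
  have hpoint : ∀ t, c ≤ (1 - ε) * ρ t + ε * (3 * V t ^ 2 + t) := by
    intro t
    by_cases htJ : t ∈ Icc (-A) (1:ℝ)
    · have hρt : m ≤ ρ t := hxm htJ
      have hqt : 3 * V xq ^ 2 + xq ≤ 3 * V t ^ 2 + t := hxq htJ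
      have habs : -(Q - 1) ≤ 3 * V t ^ 2 + t := by
        have h := neg_abs_le (3 * V xq ^ 2 + xq)
        rw [hQdef]; linarith
      have key : ε * Q ≤ m / 2 := by
        have := mul_le_mul_of_nonneg_right hε2 hQ0.le
        rw [div_mul_eq_mul_div, mul_comm (2:ℝ) Q, ← div_mul_eq_mul_div] at this
        calc ε * Q ≤ m / (2 * Q) * Q := mul_le_mul_of_nonneg_right hε2 hQ0.le
          _ = m / 2 := by field_simp
      have h1' : (1 - ε) * m ≤ (1 - ε) * ρ t :=
        mul_le_mul_of_nonneg_left hρt (by linarith)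
      have h2' : ε * (-(Q - 1)) ≤ ε * (3 * V t ^ 2 + t) :=
        mul_le_mul_of_nonneg_left habs hε0.le
      have hεm : ε * m ≤ m / 2 := by nlinarith
      calc c ≤ ε := hcε
        _ ≤ (1 - ε) * m + ε * (-(Q - 1)) := by nlinarith [key, hεm]
        _ ≤ (1 - ε) * ρ t + ε * (3 * V t ^ 2 + t) := by linarith
    · have hq1 : 1 ≤ 3 * V t ^ 2 + t := by
        rw [mem_Icc, not_and_or] at htJ
        push_neg at htJ
        rcases htJ with h | h
        · have := hKlow t
          rw [hAdef] at h
          nlinarith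
        · nlinarith [sq_nonneg (V t), pow_pos (hpos t) 2]
      have : 0 ≤ (1 - ε) * ρ t := mul_nonneg (by linarith) (hρpos t).le
      calc c ≤ ε := hcε
        _ = ε * 1 := (mul_one ε).symm
        _ ≤ ε * (3 * V t ^ 2 + t) := mul_le_mul_of_nonneg_left hq1 hε0.le
        _ ≤ (1 - ε) * ρ t + ε * (3 * V t ^ 2 + t) := by linarith
  refine ⟨c, hc, fun φ hφ hφsupp => ?_⟩
  have hφ1 : Differentiable ℝ φ := hφ.differentiable (by simp)
  have hcφ : Continuous φ := hφ1.continuous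
  have hcφ' : Continuous (deriv φ) := hφ.continuous_deriv (by simp)
  set ψ : ℝ → ℝ := fun t => φ t * (w t)⁻¹ with hψdef
  have hcψ : Continuous ψ := hcφ.mul (hcw.inv₀ hwne)
  set ψ' : ℝ → ℝ := fun t => deriv φ t * (w t)⁻¹ + φ t * (-w1 t / w t ^ 2) with hψ'def
  have hcψ' : Continuous ψ' :=
    (hcφ'.mul (hcw.inv₀ hwne)).add
      (hcφ.mul ((hcw1.neg).div (hcw.pow 2) (fun t => pow_ne_zero 2 (hwne t))))
  have hdψ : ∀ t, HasDerivAt ψ (ψ' t) t := fun t =>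
    (hφ1 t).hasDerivAt.mul ((hdw t).inv (hwne t))
  set F : ℝ → ℝ := fun t => w t * w1 t * ψ t ^ 2 with hFdef
  set E : ℝ → ℝ := fun t =>
      (w1 t * w1 t + w t * (-(deriv V t * (3 * V t ^ 2 + t) + V t))) * ψ t ^ 2
      + w t * w1 t * (2 * ψ t ^ 1 * ψ' t) with hEdef
  have hdF : ∀ t, HasDerivAt F (E t) t := fun t =>
    ((hdw t).mul (hdw1 t)).mul ((hdψ t).pow 2)
  have hcF : Continuous F := (hcw.mul hcw1).mul (hcψ.pow 2)
  have hcE : Continuous E := by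
    rw [hEdef]
    have hq : Continuous fun t : ℝ => 3 * V t ^ 2 + t :=
      (continuous_const.mul (hcV.pow 2)).add continuous_id
    exact (((hcw1.mul hcw1).add (hcw.mul (((hcV'.mul hq).add hcV).neg))).mul
        (hcψ.pow 2)).add ((hcw.mul hcw1).mul ((continuous_const.mul (hcψ.pow 1)).mul hcψ'))
  -- supports
  have hφ0 : ∀ t, t ∉ tsupport φ → φ t = 0 ∧ deriv φ t = 0 := by
    intro t ht
    refine ⟨image_eq_zero_of_notMem_tsupport ht, ?_⟩
    by_contra h
    exact ht (support_deriv_subset (by exact h))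
  have hsub : ∀ {f : ℝ → ℝ}, (∀ t, t ∉ tsupport φ → f t = 0) → HasCompactSupport f := by
    intro f hf
    apply hφsupp.mono'
    intro t ht
    by_contra hts
    exact ht (hf t hts)
  have hint : ∀ {f : ℝ → ℝ}, Continuous f → (∀ t, t ∉ tsupport φ → f t = 0) → Integrable f :=
    fun hf hz => hf.integrable_of_hasCompactSupport (hsub hz)
  have hψ0 : ∀ t, t ∉ tsupport φ → ψ t = 0 ∧ ψ' t = 0 := by
    intro t ht
    obtain ⟨h0, h1'⟩ := hφ0 t ht
    constructor
    · rw [hψdef]; simp [h0]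
    · rw [hψ'def]; simp [h0, h1']
  have i_phi2 : Integrable (fun t => φ t ^ 2) :=
    hint (hcφ.pow 2) (fun t ht => by simp [(hφ0 t ht).1])
  have i_rho : Integrable (fun t => ρ t * φ t ^ 2) :=
    hint (hcρ.mul (hcφ.pow 2)) (fun t ht => by simp [(hφ0 t ht).1])
  have i_q : Integrable (fun t => (3 * V t ^ 2 + t) * φ t ^ 2) :=
    hint ((by continuity : Continuous fun t : ℝ => 3 * V t ^ 2 + t).mul (hcφ.pow 2))
      (fun t ht => by simp [(hφ0 t ht).1])
  have i_dphi2 : Integrable (fun t => deriv φ t ^ 2) :=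
    hint (hcφ'.pow 2) (fun t ht => by simp [(hφ0 t ht).2])
  have i_sum : Integrable (fun t => deriv φ t ^ 2 + (3 * V t ^ 2 + t) * φ t ^ 2) :=
    i_dphi2.add i_q
  have i_w2 : Integrable (fun t => w t ^ 2 * ψ' t ^ 2) :=
    hint ((hcw.pow 2).mul (hcψ'.pow 2)) (fun t ht => by simp [(hψ0 t ht).2])
  have hsF : HasCompactSupport F :=
    hsub (fun t ht => by rw [hFdef]; simp [(hψ0 t ht).1])
  have hsE : HasCompactSupport E :=
    hsub (fun t ht => by rw [hEdef]; simp [(hψ0 t ht).1, (hψ0 t ht).2])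
  have hE0 : ∫ t, E t = 0 := hm_integral_deriv_zero hdF hcE hcF hsF hsE
  -- pointwise identity
  have hident : ∀ t, deriv φ t ^ 2 + (3 * V t ^ 2 + t) * φ t ^ 2
      = ρ t * φ t ^ 2 + w t ^ 2 * ψ' t ^ 2 + E t := by
    intro t
    have hne : deriv V t ≠ 0 := (hdec t).ne
    simp only [hEdef, hψ'def, hψdef, hρdef, hw1def, hwdef]
    have hne' : -deriv V t ≠ 0 := neg_ne_zero.2 hne
    field_simp
    ring
  have hsplit : ∫ t, (deriv φ t ^ 2 + (3 * V t ^ 2 + t) * φ t ^ 2)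
      = (∫ t, ρ t * φ t ^ 2) + ∫ t, w t ^ 2 * ψ' t ^ 2 := by
    calc ∫ t, (deriv φ t ^ 2 + (3 * V t ^ 2 + t) * φ t ^ 2)
        = ∫ t, (ρ t * φ t ^ 2 + w t ^ 2 * ψ' t ^ 2 + E t) :=
          integral_congr_ae (Eventually.of_forall hident)
      _ = (∫ t, (ρ t * φ t ^ 2 + w t ^ 2 * ψ' t ^ 2)) + ∫ t, E t :=
          integral_add (i_rho.add i_w2)
            (hcE.integrable_of_hasCompactSupport hsE)
      _ = (∫ t, ρ t * φ t ^ 2) + ∫ t, w t ^ 2 * ψ' t ^ 2 := by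
          rw [hE0, integral_add i_rho i_w2]; ring
  have hw2nonneg : 0 ≤ ∫ t, w t ^ 2 * ψ' t ^ 2 :=
    integral_nonneg (fun t => by positivity)
  have e2 : ∫ t, ρ t * φ t ^ 2
      ≤ ∫ t, (deriv φ t ^ 2 + (3 * V t ^ 2 + t) * φ t ^ 2) := by
    rw [hsplit]; linarith
  have e1 : ∫ t, (3 * V t ^ 2 + t) * φ t ^ 2
      ≤ ∫ t, (deriv φ t ^ 2 + (3 * V t ^ 2 + t) * φ t ^ 2) :=
    integral_mono i_q i_sum (fun t => by nlinarith [sq_nonneg (deriv φ t)])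
  have e3 : c * ∫ t, φ t ^ 2
      ≤ (1 - ε) * (∫ t, ρ t * φ t ^ 2) + ε * ∫ t, (3 * V t ^ 2 + t) * φ t ^ 2 := by
    calc c * ∫ t, φ t ^ 2 = ∫ t, c * φ t ^ 2 := (integral_const_mul c _).symm
      _ ≤ ∫ t, ((1 - ε) * (ρ t * φ t ^ 2) + ε * ((3 * V t ^ 2 + t) * φ t ^ 2)) := by
          refine integral_mono (i_phi2.const_mul c)
            ((i_rho.const_mul _).add (i_q.const_mul _)) (fun t => ?_)
          have h := hpoint t
          nlinarith [sq_nonneg (φ t)]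
      _ = (1 - ε) * (∫ t, ρ t * φ t ^ 2) + ε * ∫ t, (3 * V t ^ 2 + t) * φ t ^ 2 := by
          rw [integral_add (i_rho.const_mul _) (i_q.const_mul _),
            integral_const_mul, integral_const_mul]
  have hfin₁ := mul_le_mul_of_nonneg_left e2 (by linarith : (0:ℝ) ≤ 1 - ε)
  have hfin₂ := mul_le_mul_of_nonneg_left e1 hε0.le
  have hring : (1 - ε) * (∫ t, (deriv φ t ^ 2 + (3 * V t ^ 2 + t) * φ t ^ 2))
      + ε * (∫ t, (deriv φ t ^ 2 + (3 * V t ^ 2 + t) * φ t ^ 2))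
      = ∫ t, (deriv φ t ^ 2 + (3 * V t ^ 2 + t) * φ t ^ 2) := by ring
  linarith [e3, hfin₁, hfin₂, hring]

open Filter

/-- Coercivity of the quadratic form of the linearization `-M`, `M(φ)=φ''-(3V²+x)φ`,
around the Hastings–McLeod solution `V`. -/
theorem stmt2 (V : ℝ → ℝ) (hV : ContDiff ℝ 2 V)
    (heq : ∀ x, deriv (deriv V) x = V x * (V x ^ 2 + x))
    (hpos : ∀ x, 0 < V x) (hdec : ∀ x, deriv V x < 0) :
    ∃ c > (0:ℝ), ∀ φ : ℝ → ℝ, ContDiff ℝ (⊤ : ℕ∞) φ → HasCompactSupport φ →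
      c * ∫ x, (φ x) ^ 2 ≤ ∫ x, ((deriv φ x) ^ 2 + (3 * (V x) ^ 2 + x) * (φ x) ^ 2) := by
  exact hm_main V hV heq hpos hdec (hm_lower hV heq hpos hdec) (hm_d3 hV heq)
end

section
/- Let M(φ) = φ'' - (3V²(x) + x)φ where V is the Hastings–McLeod solution of Painlevé-II with V > 0 and V' < 0 on ℝ. If w ∈ C²(ℝ) satisfies M(w) ≤ 0 on ℝ and liminf_{|x|→∞} w(x) ≥ 0, then w ≥ 0 on ℝ. -/
/-!
Write `w = -q V`. Since `V > 0` is a strict supersolution, `M V = -2 V³`, the Wronskian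
`W = w V' - w' V` satisfies `q' = W / V²` and `W' ≥ 2 V⁴ q`. Suppose `w x₀ < 0`, i.e. `q x₀ > 0`.
If `W x₀ > 0`, then `q ≥ q x₀` and `W ≥ W x₀` on `[x₀, ∞)`, so `q' ≥ W x₀ q²` wherever
`q V = -w ≤ 1`, and `q` would blow up in finite time. If `W x₀ ≤ 0`, the reflected argument gives
`q ≥ q x₀` on `(-∞, x₀]`, so `-w = q V ≥ q x₀ V → ∞` at `-∞`, as `V ~ √(-x)`. Either way
`liminf w < 0`.
-/

open Filter Set

lemma monotoneOn_of_hasDerivAt {f f' : ℝ → ℝ} {s : Set ℝ} (hs : Convex ℝ s)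
    (hf : ∀ x ∈ s, HasDerivAt f (f' x) x) (hf' : ∀ x ∈ interior s, 0 ≤ f' x) :
    MonotoneOn f s :=
  monotoneOn_of_hasDerivWithinAt_nonneg hs (fun x hx => (hf x hx).continuousAt.continuousWithinAt)
    (fun x hx => (hf x (interior_subset hx)).hasDerivWithinAt) hf'

lemma exists_first_nonpos {f : ℝ → ℝ} {a c : ℝ} (hf : ContinuousOn f (Icc a c)) (hac : a ≤ c)
    (ha : 0 < f a) (hc : f c ≤ 0) : ∃ b ∈ Ioc a c, f b ≤ 0 ∧ ∀ y ∈ Ico a b, 0 < f y := by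
  have hS : IsCompact (Icc a c ∩ f ⁻¹' Iic 0) :=
    isCompact_Icc.of_isClosed_subset (hf.preimage_isClosed_of_isClosed isClosed_Icc isClosed_Iic)
      inter_subset_left
  obtain ⟨b, ⟨⟨hab, hbc⟩, hb⟩, hmin⟩ := hS.exists_isLeast ⟨c, ⟨hac, le_rfl⟩, hc⟩
  have hab' : a < b := hab.lt_of_ne (by rintro rfl; exact (ha.trans_le hb).false)
  refine ⟨b, ⟨hab', hbc⟩, hb, fun y ⟨hay, hyb⟩ => ?_⟩
  by_contra! hy
  exact (hmin ⟨⟨hay, hyb.le.trans hbc⟩, hy⟩).not_gt hyb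

namespace CooperativeSystem

variable {q P g P' : ℝ → ℝ} (hq : ∀ x, HasDerivAt q (g x * P x) x) (hg : ∀ x, 0 ≤ g x)
  (hP : ∀ x, HasDerivAt P (P' x) x) (hP' : ∀ x, 0 ≤ q x → 0 ≤ P' x)
include hq hg hP hP'

lemma monotoneOn_of_isLeast {s : Set ℝ} {a : ℝ} (hs : Convex ℝ s) (ha : IsLeast s a)
    (hqs : ∀ x ∈ interior s, 0 ≤ q x) (hPa : 0 ≤ P a) : MonotoneOn q s ∧ MonotoneOn P s := by
  have hPs : MonotoneOn P s :=
    monotoneOn_of_hasDerivAt hs (fun x _ => hP x) fun x hx => hP' x (hqs x hx)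
  refine ⟨monotoneOn_of_hasDerivAt hs (fun x _ => hq x) fun x hx => mul_nonneg (hg x) ?_, hPs⟩
  exact hPa.trans (hPs ha.1 (interior_subset hx) (ha.2 (interior_subset hx)))

lemma le_of_pos_of_nonneg {a : ℝ} (hqa : 0 < q a) (hPa : 0 ≤ P a) {x : ℝ} (hx : a ≤ x) :
    q a ≤ q x ∧ P a ≤ P x := by
  have hqpos : ∀ x, a ≤ x → 0 < q x := by
    intro x hx
    by_contra! hqx
    obtain ⟨b, ⟨hab, -⟩, hqb, hpos⟩ := exists_first_nonpos
      (fun y _ => (hq y).continuousAt.continuousWithinAt) hx hqa hqx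
    have hmono := (monotoneOn_of_isLeast hq hg hP hP' (convex_Icc a b) (isLeast_Icc hab.le)
      (fun y hy => by rw [interior_Icc] at hy; exact (hpos y ⟨hy.1.le, hy.2⟩).le) hPa).1
    linarith [hmono (left_mem_Icc.2 hab.le) (right_mem_Icc.2 hab.le) hab.le]
  obtain ⟨hqm, hPm⟩ := monotoneOn_of_isLeast hq hg hP hP' (convex_Ici a) isLeast_Ici
    (fun y hy => (hqpos y (interior_subset hy)).le) hPa
  exact ⟨hqm self_mem_Ici hx hx, hPm self_mem_Ici hx hx⟩

lemma le_of_pos_of_nonpos {a : ℝ} (hqa : 0 < q a) (hPa : P a ≤ 0) {x : ℝ} (hx : x ≤ a) :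
    q a ≤ q x := by
  have hq_neg : ∀ x, HasDerivAt (fun y => q (-y)) (g (-x) * -P (-x)) x := fun x =>
    ((hq (-x)).comp x (hasDerivAt_neg x)).congr_deriv (by ring)
  have hP_neg : ∀ x, HasDerivAt (fun y => -P (-y)) (P' (-x)) x := fun x =>
    ((hP (-x)).comp x (hasDerivAt_neg x)).neg.congr_deriv (by ring)
  simpa using (le_of_pos_of_nonneg hq_neg (fun x => hg (-x)) hP_neg (fun x => hP' (-x))
    (a := -a) (by simpa using hqa) (by simpa using hPa) (neg_le_neg hx)).1

end CooperativeSystem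

lemma not_forall_pos_of_mul_sq_le_deriv {q q' : ℝ → ℝ} {a c : ℝ} (hc : 0 < c)
    (hq : ∀ x, HasDerivAt q (q' x) x) (hq' : ∀ x, a ≤ x → c * q x ^ 2 ≤ q' x) :
    ¬ ∀ x, a ≤ x → 0 < q x := by
  intro hpos
  have hmono : MonotoneOn (fun x => -(q x)⁻¹ - c * x) (Ici a) := by
    refine monotoneOn_of_hasDerivAt (convex_Ici a)
      (fun x hx => (((hq x).inv (hpos x hx).ne').neg.sub ((hasDerivAt_id x).const_mul c))) ?_
    intro x hx
    have hqx := hpos x (interior_subset hx)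
    have : c ≤ q' x / q x ^ 2 := (le_div_iff₀ (by positivity)).2 (hq' x (interior_subset hx))
    simp only [mul_one, neg_div, neg_neg]
    linarith
  set x := a + (q a)⁻¹ / c
  have hax : a ≤ x := le_add_of_nonneg_right (by have := hpos a le_rfl; positivity)
  have hcx : c * x = c * a + (q a)⁻¹ := by simp only [x]; field_simp
  linarith [hmono self_mem_Ici hax hax, inv_pos.2 (hpos x hax)]

lemma not_forall_mul_le_one {q V W : ℝ → ℝ} {a c : ℝ} (hc : 0 < c)
    (hq : ∀ x, HasDerivAt q ((V x ^ 2)⁻¹ * W x) x) (hV : ∀ x, 0 < V x)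
    (hW : ∀ x, a ≤ x → c ≤ W x) (hqpos : ∀ x, a ≤ x → 0 < q x) :
    ¬ ∀ x, a ≤ x → q x * V x ≤ 1 := by
  intro hqV
  refine not_forall_pos_of_mul_sq_le_deriv hc hq (fun x hx => ?_) hqpos
  have hq2 : q x ^ 2 ≤ (V x ^ 2)⁻¹ := by
    rw [inv_eq_one_div, le_div_iff₀ (pow_pos (hV x) 2), ← mul_pow]
    exact pow_le_one₀ (mul_pos (hqpos x hx) (hV x)).le (hqV x hx)
  calc c * q x ^ 2 ≤ W x * (V x ^ 2)⁻¹ :=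
        mul_le_mul (hW x hx) hq2 (sq_nonneg _) (hc.le.trans (hW x hx))
    _ = (V x ^ 2)⁻¹ * W x := mul_comm _ _

noncomputable def wronskian (f g : ℝ → ℝ) (x : ℝ) : ℝ := f x * deriv g x - deriv f x * g x

lemma hasDerivAt_wronskian {f g : ℝ → ℝ} (hf : ContDiff ℝ 2 f) (hg : ContDiff ℝ 2 g) (x : ℝ) :
    HasDerivAt (wronskian f g) (f x * deriv (deriv g) x - deriv (deriv f) x * g x) x := by
  have hf' := (hf.iterate_deriv' 1 1).differentiable one_ne_zero x
  have hg' := (hg.iterate_deriv' 1 1).differentiable one_ne_zero x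
  have hf₁ := hf.differentiable two_ne_zero x
  have hg₁ := hg.differentiable two_ne_zero x
  exact ((hf₁.hasDerivAt.mul hg'.hasDerivAt).sub (hf'.hasDerivAt.mul hg₁.hasDerivAt)).congr_deriv
    (by simp only [Function.iterate_one]; ring)

lemma hasDerivAt_neg_div {f g : ℝ → ℝ} {x : ℝ} (hf : DifferentiableAt ℝ f x)
    (hg : DifferentiableAt ℝ g x) (hgx : g x ≠ 0) :
    HasDerivAt (fun y => -f y / g y) ((g x ^ 2)⁻¹ * wronskian f g x) x :=
  (hf.hasDerivAt.neg.div hg.hasDerivAt hgx).congr_deriv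
    (by unfold wronskian; field_simp; simp only [Pi.neg_apply]; ring)

lemma wronskian_deriv_nonneg {V w : ℝ → ℝ} {x : ℝ}
    (heq : deriv (deriv V) x = V x * (V x ^ 2 + x)) (hV : 0 < V x)
    (hMw : deriv (deriv w) x - (3 * V x ^ 2 + x) * w x ≤ 0) (hw : 0 ≤ -w x / V x) :
    0 ≤ w x * deriv (deriv V) x - deriv (deriv w) x * V x := by
  have hwx : w x ≤ 0 := by
    have := mul_nonneg hw hV.le
    rwa [div_mul_cancel₀ _ hV.ne', neg_nonneg] at this
  rw [heq]
  nlinarith [mul_le_mul_of_nonneg_right hMw hV.le, pow_pos hV 3]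

theorem stmt3_general (V w : ℝ → ℝ) (hV : ContDiff ℝ 2 V)
    (heq : ∀ x, deriv (deriv V) x = V x * (V x ^ 2 + x))
    (hpos : ∀ x, 0 < V x)
    (hbot : Tendsto (fun x => V x - Real.sqrt (-x)) atBot (nhds 0))
    (hw : ContDiff ℝ 2 w)
    (hMw : ∀ x, deriv (deriv w) x - (3 * (V x) ^ 2 + x) * w x ≤ 0)
    (hliminf : ∀ ε > (0:ℝ), ∃ R : ℝ, ∀ x : ℝ, R ≤ |x| → -ε ≤ w x) :
    ∀ x, 0 ≤ w x := by
  intro x₀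
  by_contra! hx₀
  set q : ℝ → ℝ := fun x => -w x / V x
  have hqV : ∀ x, q x * V x = -w x := fun x => div_mul_cancel₀ _ (hpos x).ne'
  have hq : ∀ x, HasDerivAt q ((V x ^ 2)⁻¹ * wronskian w V x) x := fun x =>
    hasDerivAt_neg_div (hw.differentiable two_ne_zero x) (hV.differentiable two_ne_zero x)
      (hpos x).ne'
  have hg : ∀ x, 0 ≤ (V x ^ 2)⁻¹ := fun x => by positivity
  have hW := hasDerivAt_wronskian hw hV
  have hW' : ∀ x, 0 ≤ q x → _ := fun x => wronskian_deriv_nonneg (heq x) (hpos x) (hMw x)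
  have hq₀ : 0 < q x₀ := div_pos (neg_pos.2 hx₀) (hpos x₀)
  obtain ⟨R, hR⟩ := hliminf 1 one_pos
  rcases lt_or_ge 0 (wronskian w V x₀) with hW₀ | hW₀
  · have hright := fun x (hx : max x₀ R ≤ x) =>
      CooperativeSystem.le_of_pos_of_nonneg hq hg hW hW' hq₀ hW₀.le ((le_max_left _ _).trans hx)
    refine not_forall_mul_le_one hW₀ hq hpos (fun x hx => (hright x hx).2)
      (fun x hx => hq₀.trans_le (hright x hx).1) fun x hx => ?_
    linarith [hqV x, hR x (by linarith [le_abs_self x, le_max_right x₀ R])]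
  · have hVbot : Tendsto V atBot atTop := by
      simpa using hbot.add_atTop (Real.tendsto_sqrt_atTop.comp tendsto_neg_atBot_atTop)
    obtain ⟨x, hVx, hx⟩ := ((hVbot.eventually_gt_atTop (q x₀)⁻¹).and
      (eventually_le_atBot (min x₀ (-R)))).exists
    have hqx := CooperativeSystem.le_of_pos_of_nonpos hq hg hW hW' hq₀ hW₀
      (hx.trans (min_le_left _ _))
    have : 1 < q x * V x := calc
      1 = q x₀ * (q x₀)⁻¹ := (mul_inv_cancel₀ hq₀.ne').symm
      _ < q x₀ * V x := mul_lt_mul_of_pos_left hVx hq₀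
      _ ≤ q x * V x := mul_le_mul_of_nonneg_right hqx (hpos x).le
    linarith [hqV x, hR x (by linarith [neg_le_abs x, min_le_right x₀ (-R)])]

/-- Maximum principle for `M(φ) = φ'' - (3V²+x)φ` with `V` the Hastings–McLeod solution:
if `M(w) ≤ 0` and `liminf_{|x|→∞} w ≥ 0` then `w ≥ 0`. -/
theorem stmt3 (V w : ℝ → ℝ) (hV : ContDiff ℝ 2 V)
    (heq : ∀ x, deriv (deriv V) x = V x * (V x ^ 2 + x))
    (hpos : ∀ x, 0 < V x) (hdec : ∀ x, deriv V x < 0)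
    (hbot : Tendsto (fun x => V x - Real.sqrt (-x)) atBot (nhds 0))
    (htop : Tendsto V atTop (nhds 0))
    (hw : ContDiff ℝ 2 w)
    (hMw : ∀ x, deriv (deriv w) x - (3 * (V x) ^ 2 + x) * w x ≤ 0)
    (hliminf : ∀ ε > (0:ℝ), ∃ R : ℝ, ∀ x : ℝ, R ≤ |x| → -ε ≤ w x) :
    ∀ x, 0 ≤ w x :=
  stmt3_general V w hV heq hpos hbot hw hMw hliminf
end

section
/- Let p > 1 and let u be a C² solution of -u'' = xu - u^{p+1} on [0,∞) with u(0) = 0, u not identically 0, and 0 ≤ u(x) ≤ x^{1/p} for all x ≥ 0. Then u'(x) → 0 as x → ∞ and u' > 0 on [0,∞); in particular u is strictly increasing. -/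
/-!
Since `-u'' = u (x - u ^ p) ≥ 0` whenever `0 ≤ u ≤ x ^ (1 / p)`, the solution is concave on
`[0, ∞)`. A concave function that is bounded below cannot have a negative slope anywhere, and one
that grows sublinearly (here `u ≤ x ^ (1 / p)` with `1 / p < 1`) cannot keep a slope `≥ ε > 0`;
as `u'` is antitone, it decreases to `0`. If `u'` vanished at some `x₀`, then `u` would be constant
on `[x₀, ∞)`, and the equation at two points of that ray forces the constant to be `0`, so the
nondecreasing, nonnegative `u` would vanish identically.
-/

open Set Filter Topology

namespace ConcaveOn

variable {f : ℝ → ℝ} {a m : ℝ}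

theorem deriv_nonneg_of_forall_le (hf : ConcaveOn ℝ (Ici a) f) (hd : Differentiable ℝ f)
    (hm : ∀ x ≥ a, m ≤ f x) {x : ℝ} (hx : a ≤ x) : 0 ≤ deriv f x := by
  by_contra! hneg
  -- at `y` the tangent line at `x` has dropped to `m + deriv f x < m`
  set y := x + (f x - m) / -deriv f x + 1 with hy
  have hxy : x < y := by
    have : 0 ≤ (f x - m) / -deriv f x := div_nonneg (by linarith [hm x hx]) (by linarith)
    linarith
  have hslope : slope f x y ≤ deriv f x :=
    hf.slope_le_deriv hx (hx.trans hxy.le) hxy (hd x)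
  rw [slope_def_field, div_le_iff₀ (by linarith)] at hslope
  have : deriv f x * (y - x) = m - f x + deriv f x := by
    rw [hy]; field_simp [hneg.ne]; ring
  linarith [hm y (hx.trans hxy.le)]

theorem exists_deriv_lt_of_eventually_le_mul (hf : ConcaveOn ℝ (Ici a) f)
    (hd : Differentiable ℝ f) (hsub : ∀ ε > 0, ∀ᶠ x in atTop, f x ≤ ε * x)
    {ε : ℝ} (hε : 0 < ε) : ∃ x ≥ a, deriv f x < ε := by
  by_contra! hge
  obtain ⟨y, hy_le, hay, hy_big⟩ := ((hsub (ε / 2) (half_pos hε)).and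
    ((eventually_gt_atTop a).and (eventually_gt_atTop (2 * (a - f a / ε))))).exists
  have hslope : deriv f y ≤ slope f a y :=
    hf.deriv_le_slope (mem_Ici.2 le_rfl) hay.le hay (hd y)
  rw [slope_def_field, le_div_iff₀ (by linarith)] at hslope
  have hline : f a + ε * (y - a) ≤ f y := by
    linarith [mul_le_mul_of_nonneg_right (hge y hay.le) (sub_nonneg.2 hay.le)]
  -- the line `f a + ε * (y - a)` exceeds `ε / 2 * y` beyond `2 * (a - f a / ε)`
  have hbig := mul_lt_mul_of_pos_right hy_big hε
  rw [show 2 * (a - f a / ε) * ε = 2 * (ε * a - f a) by field_simp] at hbig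
  linarith

theorem tendsto_deriv_atTop_zero (hf : ConcaveOn ℝ (Ici a) f) (hd : Differentiable ℝ f)
    (hm : ∀ x ≥ a, m ≤ f x) (hsub : ∀ ε > 0, ∀ᶠ x in atTop, f x ≤ ε * x) :
    Tendsto (deriv f) atTop (𝓝 0) := by
  have hanti : AntitoneOn (deriv f) (Ici a) := hf.antitoneOn_deriv fun x _ => hd x
  refine tendsto_order.2 ⟨fun b hb => ?_, fun b hb => ?_⟩
  · filter_upwards [eventually_ge_atTop a] with x hx
    exact hb.trans_le (hf.deriv_nonneg_of_forall_le hd hm hx)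
  · obtain ⟨N, hN, hNb⟩ := hf.exists_deriv_lt_of_eventually_le_mul hd hsub hb
    filter_upwards [eventually_ge_atTop N] with x hx
    exact (hanti hN (hN.trans hx) hx).trans_lt hNb

variable {x₀ : ℝ}

theorem deriv_eqOn_zero_of_deriv_eq_zero (hf : ConcaveOn ℝ (Ici a) f) (hd : Differentiable ℝ f)
    (hm : ∀ x ≥ a, m ≤ f x) (hx₀ : a ≤ x₀) (h : deriv f x₀ = 0) :
    EqOn (deriv f) 0 (Ici x₀) := fun _ hx =>
  le_antisymm ((hf.antitoneOn_deriv (fun y _ => hd y) hx₀ (hx₀.trans hx) hx).trans_eq h)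
    (hf.deriv_nonneg_of_forall_le hd hm (hx₀.trans hx))

theorem eqOn_of_deriv_eq_zero (hf : ConcaveOn ℝ (Ici a) f) (hd : Differentiable ℝ f)
    (hm : ∀ x ≥ a, m ≤ f x) (hx₀ : a ≤ x₀) (h : deriv f x₀ = 0) :
    EqOn f (fun _ => f x₀) (Ici x₀) := by
  intro x hx
  rcases (mem_Ici.1 hx).eq_or_lt with rfl | hlt
  · rfl
  have hle : slope f x₀ x ≤ 0 := h ▸ hf.slope_le_deriv hx₀ (hx₀.trans hx) hlt (hd x₀)
  have hge : deriv f x ≤ slope f x₀ x := hf.deriv_le_slope hx₀ (hx₀.trans hx) hlt (hd x)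
  rw [hf.deriv_eqOn_zero_of_deriv_eq_zero hd hm hx₀ h hx] at hge
  have hslope := le_antisymm hle hge
  rw [slope_def_field, div_eq_zero_iff, sub_eq_zero, sub_eq_zero] at hslope
  exact hslope.resolve_right hlt.ne'

end ConcaveOn

theorem rpow_add_one_le_mul {p x y : ℝ} (hp : 0 < p) (hx : 0 ≤ x) (hy : 0 ≤ y)
    (hyx : y ≤ x ^ (1 / p)) : y ^ (p + 1) ≤ x * y := by
  rw [Real.rpow_add' hy (by linarith), Real.rpow_one]
  gcongr
  rwa [one_div, Real.le_rpow_inv_iff_of_pos hy hx hp] at hyx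

theorem eventually_rpow_le_mul_atTop {s ε : ℝ} (hs : s < 1) (hε : 0 < ε) :
    ∀ᶠ x in atTop, x ^ s ≤ ε * x := by
  filter_upwards [(tendsto_rpow_neg_atTop (sub_pos.2 hs)).eventually (ge_mem_nhds hε),
    eventually_gt_atTop 0] with x hsmall hx
  calc x ^ s = x ^ (-(1 - s)) * x := by rw [← Real.rpow_add_one hx.ne']; ring_nf
    _ ≤ ε * x := by gcongr

theorem eqOn_zero_of_deriv_eq_zero {p : ℝ} {u : ℝ → ℝ} (hd : Differentiable ℝ u)
    (hconc : ConcaveOn ℝ (Ici 0) u)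
    (heq : ∀ x ≥ (0:ℝ), -(deriv (deriv u) x) = x * u x - u x ^ (p + 1))
    (hnonneg : ∀ x ≥ (0:ℝ), 0 ≤ u x) {x₀ : ℝ} (hx₀ : 0 ≤ x₀) (hflat : deriv u x₀ = 0) :
    EqOn u 0 (Ici 0) := by
  have hconst := hconc.eqOn_of_deriv_eq_zero hd hnonneg hx₀ hflat
  have hu'' : ∀ x > x₀, deriv (deriv u) x = 0 := fun x hx => by
    rw [((hconc.deriv_eqOn_zero_of_deriv_eq_zero hd hnonneg hx₀ hflat).eventuallyEq_of_mem
      (Ici_mem_nhds hx)).deriv_eq, Pi.zero_def, deriv_const]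
  -- on the tail `u ≡ c` solves `x * c = c ^ (p + 1)` for two different `x`
  have hc : u x₀ = 0 := by
    have e₁ := heq (x₀ + 1) (by linarith)
    have e₂ := heq (x₀ + 2) (by linarith)
    rw [hu'' _ (by linarith), hconst (by simp : x₀ ≤ x₀ + 1)] at e₁
    rw [hu'' _ (by linarith), hconst (by simp : x₀ ≤ x₀ + 2)] at e₂
    linarith
  have hmono : MonotoneOn u (Ici 0) :=
    monotoneOn_of_deriv_nonneg (convex_Ici 0) hd.continuous.continuousOn hd.differentiableOn
      fun x hx => hconc.deriv_nonneg_of_forall_le hd hnonneg (interior_subset hx)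
  intro y hy
  have hle : u y ≤ u (max y x₀) := hmono hy (hy.trans (le_max_left y x₀)) (le_max_left y x₀)
  rw [hconst (le_max_right y x₀ : x₀ ≤ max y x₀), hc] at hle
  exact le_antisymm hle (hnonneg y hy)

theorem stmt6_general (p : ℝ) (hp : 1 < p) (u : ℝ → ℝ) (hu : ContDiff ℝ 2 u)
    (heq : ∀ x ≥ (0:ℝ), -(deriv (deriv u) x) = x * u x - u x ^ (p + 1))
    (hne : ∃ x ≥ (0:ℝ), u x ≠ 0)
    (hb : ∀ x ≥ (0:ℝ), 0 ≤ u x ∧ u x ≤ x ^ (1 / p)) :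
    Tendsto (deriv u) atTop (nhds 0) ∧ (∀ x ≥ (0:ℝ), 0 < deriv u x) ∧
      StrictMonoOn u (Set.Ici 0) := by
  have hd : Differentiable ℝ u := hu.differentiable (by norm_num)
  have hnonneg : ∀ x ≥ (0:ℝ), 0 ≤ u x := fun x hx => (hb x hx).1
  have hconc : ConcaveOn ℝ (Ici 0) u := by
    refine concaveOn_of_deriv2_nonpos (convex_Ici 0) hd.continuous.continuousOn
      hd.differentiableOn hu.differentiable_deriv_two.differentiableOn fun x hx => ?_
    rw [interior_Ici] at hx
    have := rpow_add_one_le_mul (by linarith) hx.le (hb x hx.le).1 (hb x hx.le).2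
    show deriv (deriv u) x ≤ 0
    linarith [heq x hx.le]
  have hsub : ∀ ε > 0, ∀ᶠ x in atTop, u x ≤ ε * x := fun ε hε => by
    filter_upwards [eventually_rpow_le_mul_atTop ((div_lt_one (by linarith)).2 hp) hε,
      eventually_ge_atTop 0] with x hx hx₀ using (hb x hx₀).2.trans hx
  have hpos : ∀ x ≥ (0:ℝ), 0 < deriv u x := by
    intro x hx
    refine (hconc.deriv_nonneg_of_forall_le hd hnonneg hx).lt_of_ne' fun hflat => ?_
    obtain ⟨y, hy, huy⟩ := hne
    exact huy (eqOn_zero_of_deriv_eq_zero hd hconc heq hnonneg hx hflat hy)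
  exact ⟨hconc.tendsto_deriv_atTop_zero hd hnonneg hsub, hpos,
    strictMonoOn_of_deriv_pos (convex_Ici 0) hd.continuous.continuousOn
      fun x hx => hpos x (interior_subset hx)⟩

/-- A nontrivial solution of `-u'' = xu - u^{p+1}` on `[0,∞)` with `u(0)=0` and
`0 ≤ u ≤ x^{1/p}` satisfies `u' → 0` at `∞` and `u' > 0`; in particular `u` is
strictly increasing. -/
theorem stmt6 (p : ℝ) (hp : 1 < p) (u : ℝ → ℝ) (hu : ContDiff ℝ 2 u)
    (heq : ∀ x ≥ (0:ℝ), -(deriv (deriv u) x) = x * u x - u x ^ (p + 1))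
    (h0 : u 0 = 0) (hne : ∃ x ≥ (0:ℝ), u x ≠ 0)
    (hb : ∀ x ≥ (0:ℝ), 0 ≤ u x ∧ u x ≤ x ^ (1 / p)) :
    Tendsto (deriv u) atTop (nhds 0) ∧ (∀ x ≥ (0:ℝ), 0 < deriv u x) ∧
      StrictMonoOn u (Set.Ici 0) :=
  stmt6_general p hp u hu heq hne hb
end

section
/- Let p > 1 and let U₊ solve -u'' = xu - u^{p+1} on [0,∞), U₊(0)=0, 0 < U₊(x) < x^{1/p} for x > 0, with U₊' > 0 and x^{-1/p} U₊(x) → 1 as x → ∞. Then U₊(x) - x^{1/p} = O(x^{(1-3p)/p}) as x → ∞. -/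
/-!
With `a = 1/p`, the equation reads `U'' = U (U^p - x)`, and convexity of `t ↦ t^p` together with
`U ~ x^a` gives `U'' ≤ x (U - x^a)` for large `x`. For every `δ > 0` the function
`U + M x^(a-3) - (1-δ) x^a` is nonnegative at a large point `L` (by the choice of `M`) and at
infinity (since `U ~ x^a`), and it cannot have a negative interior minimum, because there its
second derivative would be negative. Letting `δ → 0` gives `0 ≤ x^a - U ≤ M x^(a-3)`.
-/

open Filter Set Topology

theorem IsLocalMin.deriv_deriv_nonneg_s7 {f : ℝ → ℝ} {x₀ : ℝ} (hmin : IsLocalMin f x₀)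
    (hc : ContinuousAt f x₀) : 0 ≤ deriv (deriv f) x₀ := by
  by_contra! hneg
  have hmax := isLocalMax_of_deriv_deriv_neg hneg hmin.deriv_eq_zero hc
  have hconst : f =ᶠ[𝓝 x₀] fun _ ↦ f x₀ := by
    filter_upwards [hmin, hmax] with x h₁ h₂ using le_antisymm h₂ h₁
  have : deriv (deriv f) x₀ = 0 := by
    rw [hconst.deriv.deriv_eq]
    simp
  exact hneg.ne this

theorem nonneg_of_deriv_deriv_neg_of_neg {g g' g'' : ℝ → ℝ} {L : ℝ}
    (hg : ∀ x ≥ L, HasDerivAt g (g' x) x) (hg' : ∀ x ≥ L, HasDerivAt g' (g'' x) x)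
    (hL : 0 ≤ g L) (htop : ∀ᶠ x in atTop, 0 ≤ g x) (hneg : ∀ x > L, g x < 0 → g'' x < 0) :
    ∀ x ≥ L, 0 ≤ g x := by
  intro x₁ hx₁
  by_contra! hgx₁
  obtain ⟨R, hR⟩ := eventually_atTop.1 htop
  have hcont : ContinuousOn g (Icc L (max R x₁)) := fun x hx ↦
    (hg x hx.1).continuousAt.continuousWithinAt
  obtain ⟨x₀, hx₀, hmin⟩ := isCompact_Icc.exists_isMinOn
    (nonempty_Icc.2 (hx₁.trans (le_max_right _ _))) hcont
  have hgx₀ : g x₀ < 0 := (hmin ⟨hx₁, le_max_right _ _⟩).trans_lt hgx₁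
  have hLx₀ : L < x₀ := hx₀.1.lt_of_ne (by rintro rfl; linarith)
  have hx₀R : x₀ < max R x₁ :=
    hx₀.2.lt_of_ne (by rintro rfl; linarith [hR _ (le_max_left R x₁)])
  have hderiv : deriv g =ᶠ[𝓝 x₀] g' := by
    filter_upwards [Ioi_mem_nhds hLx₀] with x hx using (hg x hx.le).deriv
  have hsecond := (hmin.isLocalMin (Icc_mem_nhds hLx₀ hx₀R)).deriv_deriv_nonneg_s7
    (hg x₀ hLx₀.le).continuousAt
  rw [hderiv.deriv_eq, (hg' x₀ hLx₀.le).deriv] at hsecond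
  exact (hneg x₀ hLx₀ hgx₀).not_ge hsecond

theorem rpow_tangent_le {p u s : ℝ} (hp : 1 ≤ p) (hu : 0 < u) (hus : u ≤ s) :
    p * u ^ (p - 1) * (s - u) ≤ s ^ p - u ^ p := by
  rcases hus.eq_or_lt with rfl | hlt
  · simp
  have h := (convexOn_rpow hp).le_slope_of_hasDerivAt hu.le (hu.trans hlt).le hlt
    (Real.hasDerivAt_rpow_const (Or.inl hu.ne'))
  rwa [slope_def_field, le_div_iff₀ (sub_pos.2 hlt)] at h

theorem mul_rpow_sub_le_mul_sub_rpow {p u x : ℝ} (hp : 1 ≤ p) (hx : 0 ≤ x) (hu : 0 < u)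
    (hux : u ≤ x ^ (1 / p)) (hpu : x ≤ p * u ^ p) :
    u * (u ^ p - x) ≤ x * (u - x ^ (1 / p)) := by
  have hs : (x ^ (1 / p)) ^ p = x := by
    rw [one_div, Real.rpow_inv_rpow hx (by positivity)]
  have htangent := rpow_tangent_le hp hu hux
  rw [hs, Real.rpow_sub_one hu.ne'] at htangent
  have hu_mul : u * (p * (u ^ p / u) * (x ^ (1 / p) - u)) = p * u ^ p * (x ^ (1 / p) - u) := by
    field_simp
  nlinarith [mul_le_mul_of_nonneg_left htangent hu.le,
    mul_le_mul_of_nonneg_right hpu (sub_nonneg.2 hux)]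

theorem eventually_mul_rpow_le {U : ℝ → ℝ} {a t : ℝ}
    (hlim : Tendsto (fun x ↦ U x / x ^ a) atTop (𝓝 1)) (ht : t < 1) :
    ∀ᶠ x in atTop, t * x ^ a ≤ U x := by
  filter_upwards [hlim.eventually_const_le ht, eventually_gt_atTop 0] with x h hx
  rwa [le_div_iff₀ (Real.rpow_pos_of_pos hx a)] at h

theorem eventually_deriv_deriv_le {p : ℝ} (hp : 1 < p) {U : ℝ → ℝ}
    (heq : ∀ x ≥ (0:ℝ), -(deriv (deriv U) x) = x * U x - U x ^ (p + 1))
    (hb : ∀ x > (0:ℝ), 0 < U x ∧ U x < x ^ (1 / p))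
    (hlim : Tendsto (fun x ↦ U x / x ^ (1 / p)) atTop (𝓝 1)) :
    ∀ᶠ x in atTop, deriv (deriv U) x ≤ x * (U x - x ^ (1 / p)) := by
  have hp0 : 0 < p := by linarith
  have ht : p⁻¹ ^ p⁻¹ < 1 :=
    Real.rpow_lt_one (by positivity) (inv_lt_one_of_one_lt₀ hp) (by positivity)
  filter_upwards [eventually_mul_rpow_le hlim ht, eventually_gt_atTop 0] with x htx hx
  obtain ⟨hU0, hUx⟩ := hb x hx
  have hpu : x ≤ p * U x ^ p := by
    have h := Real.rpow_le_rpow (by positivity) htx hp0.le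
    rw [Real.mul_rpow (by positivity) (by positivity), one_div,
      Real.rpow_inv_rpow (by positivity) hp0.ne', Real.rpow_inv_rpow hx.le hp0.ne'] at h
    rwa [inv_mul_le_iff₀ hp0] at h
  have hU'' : deriv (deriv U) x = U x * (U x ^ p - x) := by
    have h := heq x hx.le
    rw [Real.rpow_add_one hU0.ne'] at h
    linear_combination -h
  rw [hU'']
  exact mul_rpow_sub_le_mul_sub_rpow hp.le hx.le hU0 hUx.le hpu

theorem barrier_deriv_deriv_neg {a M δ x u u'' : ℝ} (ha0 : 0 < a) (ha1 : a < 1)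
    (hM : 1 / 2 ≤ M) (hδ : 0 ≤ δ) (hx : 3 ≤ x) (hu'' : u'' ≤ x * (u - x ^ a))
    (hneg : u + M * x ^ (a - 3) - (1 - δ) * x ^ a < 0) :
    u'' + M * ((a - 3) * ((a - 4) * x ^ (a - 5)))
      - (1 - δ) * (a * ((a - 1) * x ^ (a - 2))) < 0 := by
  have hx0 : 0 < x := by linarith
  -- writing each power as `x ^ n * x ^ (a - 5)` reduces the estimate to polynomial arithmetic
  set y := x ^ (a - 5)
  have hy0 : 0 < y := Real.rpow_pos_of_pos hx0 _
  have hpow : ∀ (n : ℕ) (b : ℝ), b = a - 5 + n → x ^ b = x ^ n * y := by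
    rintro n b rfl
    rw [Real.rpow_add hx0, Real.rpow_natCast, mul_comm]
  rw [hpow 2 (a - 3) (by push_cast; ring), hpow 5 a (by push_cast; ring)] at hneg
  rw [hpow 5 a (by push_cast; ring)] at hu''
  rw [hpow 3 (a - 2) (by push_cast; ring)]
  have hx3 : 27 ≤ x ^ 3 := by nlinarith
  have hxy : 0 < x ^ 3 * y := by positivity
  have hu''_lt : u'' < -(M * (x ^ 3 * y)) := by
    have hw : u - x ^ 5 * y < -(M * (x ^ 2 * y)) := by
      nlinarith [mul_nonneg hδ (by positivity : 0 ≤ x ^ 5 * y)]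
    calc u'' ≤ x * (u - x ^ 5 * y) := hu''
      _ < x * -(M * (x ^ 2 * y)) := mul_lt_mul_of_pos_left hw hx0
      _ = -(M * (x ^ 3 * y)) := by ring
  have hK : M * ((a - 3) * ((a - 4) * y)) ≤ M / 2 * (x ^ 3 * y) := by
    have h12 : (a - 3) * (a - 4) ≤ x ^ 3 / 2 := by nlinarith
    calc M * ((a - 3) * ((a - 4) * y)) = M * y * ((a - 3) * (a - 4)) := by ring
      _ ≤ M * y * (x ^ 3 / 2) := mul_le_mul_of_nonneg_left h12 (by positivity)
      _ = M / 2 * (x ^ 3 * y) := by ring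
  have hc : -((1 - δ) * (a * (a - 1))) ≤ M / 2 := by
    nlinarith [mul_nonneg hδ (mul_nonneg ha0.le (sub_nonneg.2 ha1.le)), sq_nonneg (a - 1 / 2)]
  linarith [mul_le_mul_of_nonneg_right hc hxy.le]

theorem hasDerivAt_mul_rpow_const {x : ℝ} (hx : 0 < x) (c r : ℝ) :
    HasDerivAt (fun x ↦ c * x ^ r) (c * (r * x ^ (r - 1))) x :=
  (Real.hasDerivAt_rpow_const (Or.inl hx.ne')).const_mul c

theorem barrier_nonneg {U : ℝ → ℝ} (hU : ContDiff ℝ 2 U) {a L M δ : ℝ} (ha0 : 0 < a)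
    (ha1 : a < 1) (hL : 3 ≤ L) (hU'' : ∀ x ≥ L, deriv (deriv U) x ≤ x * (U x - x ^ a))
    (hlim : Tendsto (fun x ↦ U x / x ^ a) atTop (𝓝 1)) (hM : 1 / 2 ≤ M)
    (hML : L ^ a ≤ U L + M * L ^ (a - 3)) (hδ : 0 < δ) :
    ∀ x ≥ L, 0 ≤ U x + M * x ^ (a - 3) - (1 - δ) * x ^ a := by
  have hdU : ∀ x, HasDerivAt U (deriv U x) x :=
    fun x ↦ ((hU.differentiable (by norm_num)) x).hasDerivAt
  have hd2U : ∀ x, HasDerivAt (deriv U) (deriv (deriv U) x) x := fun x ↦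
    ((hU.iterate_deriv' 1 1).differentiable one_ne_zero x).hasDerivAt
  refine nonneg_of_deriv_deriv_neg_of_neg
    (g' := fun x ↦ deriv U x + M * ((a - 3) * x ^ (a - 4)) - (1 - δ) * (a * x ^ (a - 1)))
    (g'' := fun x ↦ deriv (deriv U) x + M * ((a - 3) * ((a - 4) * x ^ (a - 5)))
      - (1 - δ) * (a * ((a - 1) * x ^ (a - 2)))) ?_ ?_ ?_ ?_ ?_
  · intro x hx
    have h := ((hdU x).add (hasDerivAt_mul_rpow_const (by linarith) M (a - 3))).sub
      (hasDerivAt_mul_rpow_const (by linarith) (1 - δ) a)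
    rwa [show a - 3 - 1 = a - 4 by ring] at h
  · intro x hx
    have hx0 : 0 < x := by linarith
    have h := ((hd2U x).add ((hasDerivAt_mul_rpow_const hx0 (a - 3) (a - 4)).const_mul M)).sub
      ((hasDerivAt_mul_rpow_const hx0 a (a - 1)).const_mul (1 - δ))
    rwa [show a - 4 - 1 = a - 5 by ring, show a - 1 - 1 = a - 2 by ring] at h
  · nlinarith [Real.rpow_pos_of_pos (by linarith : 0 < L) a]
  · filter_upwards [eventually_mul_rpow_le hlim (by linarith : 1 - δ < 1), eventually_gt_atTop 0]
      with x hx hx0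
    nlinarith [Real.rpow_pos_of_pos hx0 (a - 3)]
  · intro x hx hneg
    exact barrier_deriv_deriv_neg ha0 ha1 hM hδ.le (by linarith) (hU'' x hx.le) hneg

theorem stmt7_general (p : ℝ) (hp : 1 < p) (U : ℝ → ℝ) (hU : ContDiff ℝ 2 U)
    (heq : ∀ x ≥ (0:ℝ), -(deriv (deriv U) x) = x * U x - U x ^ (p + 1))
    (hb : ∀ x > (0:ℝ), 0 < U x ∧ U x < x ^ (1 / p))
    (hlim : Tendsto (fun x => U x / x ^ (1 / p)) atTop (nhds 1)) :
    ∃ C > (0:ℝ), ∃ X : ℝ, ∀ x ≥ X, |U x - x ^ (1 / p)| ≤ C * x ^ ((1 - 3 * p) / p) := by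
  have ha0 : 0 < 1 / p := by positivity
  have ha1 : 1 / p < 1 := (div_lt_one (by linarith)).2 hp
  obtain ⟨L₀, hL₀⟩ := eventually_atTop.1 (eventually_deriv_deriv_le hp heq hb hlim)
  set L := max L₀ 3
  have hL0 : 0 < L := by positivity
  set M := max (1 / 2) ((L ^ (1 / p) - U L) / L ^ (1 / p - 3))
  have hML : L ^ (1 / p) ≤ U L + M * L ^ (1 / p - 3) := by
    have h : (L ^ (1 / p) - U L) / L ^ (1 / p - 3) ≤ M := le_max_right _ _
    rw [div_le_iff₀ (Real.rpow_pos_of_pos hL0 _)] at h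
    linarith
  have hbarrier := fun δ (hδ : 0 < δ) ↦ barrier_nonneg hU ha0 ha1 (le_max_right _ _)
    (fun x hx ↦ hL₀ x ((le_max_left _ _).trans hx)) hlim (le_max_left _ _) hML hδ
  refine ⟨M, by positivity, L, fun x hx ↦ ?_⟩
  have hx0 : 0 < x := hL0.trans_le hx
  have hxa : 0 < x ^ (1 / p) := Real.rpow_pos_of_pos hx0 _
  rw [abs_of_neg (sub_neg.2 (hb x hx0).2), neg_sub,
    show (1 - 3 * p) / p = 1 / p - 3 by field_simp]
  refine le_of_forall_pos_le_add fun ε hε ↦ ?_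
  have h := hbarrier (ε / x ^ (1 / p)) (by positivity) x hx
  rw [sub_mul, div_mul_cancel₀ _ hxa.ne'] at h
  linarith

/-- Refined asymptotics: `U₊(x) - x^{1/p} = O(x^{(1-3p)/p})` as `x → ∞`. -/
theorem stmt7 (p : ℝ) (hp : 1 < p) (U : ℝ → ℝ) (hU : ContDiff ℝ 2 U)
    (heq : ∀ x ≥ (0:ℝ), -(deriv (deriv U) x) = x * U x - U x ^ (p + 1))
    (h0 : U 0 = 0) (hb : ∀ x > (0:ℝ), 0 < U x ∧ U x < x ^ (1 / p))
    (hd : ∀ x ≥ (0:ℝ), 0 < deriv U x)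
    (hlim : Tendsto (fun x => U x / x ^ (1 / p)) atTop (nhds 1)) :
    ∃ C > (0:ℝ), ∃ X : ℝ, ∀ x ≥ X, |U x - x ^ (1 / p)| ≤ C * x ^ ((1 - 3 * p) / p) :=
  stmt7_general p hp U hU heq hb hlim
end

section
/- Let Ai be the Airy function (positive, decreasing on [1,∞), solving y'' = xy, with Ai'(x) ~ -x^{1/2}Ai(x) as x → ∞) and define Ψ on [1,∞) as the solution of -Ψ'' + xΨ = x² Ai with Ψ(1) = 1, Ψ(∞) = 0, Ψ > 0. Writing Ψ = Ai · h with h'(x) = (∫_x^∞ t² Ai(t)² dt)/Ai(x)², one has h'(x) ~ (1/2) x^{3/2}, h(x) ~ (1/5) x^{5/2}, and consequently Ψ(x) ~ (1/5) x^{5/2} Ai(x) and Ψ'(x) ~ -(1/5) x³ Ai(x) as x → ∞. -/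
/-!
Write `F x = ∫_x^∞ t² Ai(t)² dt`. Since `Ai'/(√x Ai) → -1`, eventually `Ai' ≤ -Ai/2`, so `Ai²`
decays exponentially and both `F` and `Ai² x^{3/2}/2` tend to `0`. Their derivatives,
`-x² Ai²` and `x² Ai² (Ai'/(√x Ai) + (3/4) x^{-3/2})`, have ratio tending to `1`, so l'Hôpital
gives `h' = F/Ai² ~ x^{3/2}/2`. The `∞/∞` form of l'Hôpital, proved by integrating a little-o
bound on the derivative, turns this into `h ~ x^{5/2}/5`, hence `Ψ = Ai h ~ x^{5/2} Ai/5`; finally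
in `Ψ' = Ai' h + Ai h'` the first term `~ -x³ Ai/5` dominates.
-/

open Filter MeasureTheory Asymptotics Topology Set Real

lemma Real.rpow_natCast_div_two {x : ℝ} (hx : 0 ≤ x) (n : ℕ) :
    x ^ ((n : ℝ) / 2) = √x ^ n := by
  rw [sqrt_eq_rpow, ← rpow_natCast, ← rpow_mul hx]
  ring_nf

section TailIntegral

variable {f : ℝ → ℝ} {a : ℝ}

lemma integral_Ioi_eq_sub_intervalIntegral (hf : IntegrableOn f (Ioi a)) {x : ℝ} (hx : a ≤ x) :
    ∫ t in Ioi x, f t = (∫ t in Ioi a, f t) - ∫ t in a..x, f t := by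
  rw [← intervalIntegral.integral_Ioi_sub_Ioi hf hx, sub_sub_cancel]

lemma tendsto_integral_Ioi_atTop_nhds_zero (hf : IntegrableOn f (Ioi a)) :
    Tendsto (fun x => ∫ t in Ioi x, f t) atTop (𝓝 0) := by
  have h := (intervalIntegral_tendsto_integral_Ioi a hf tendsto_id).const_sub (∫ t in Ioi a, f t)
  rw [sub_self] at h
  exact h.congr' <| (eventually_ge_atTop a).mono fun x hx =>
    (integral_Ioi_eq_sub_intervalIntegral hf hx).symm

lemma hasDerivAt_integral_Ioi (hf : IntegrableOn f (Ioi a)) (hc : Continuous f) {x : ℝ}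
    (hx : a < x) : HasDerivAt (fun y => ∫ t in Ioi y, f t) (-f x) x := by
  have h := (intervalIntegral.integral_hasDerivAt_right (hc.intervalIntegrable a x)
    (hc.stronglyMeasurableAtFilter _ _) hc.continuousAt).const_sub (∫ t in Ioi a, f t)
  exact h.congr_of_eventuallyEq <| (eventually_gt_nhds hx).mono fun y hy =>
    integral_Ioi_eq_sub_intervalIntegral hf hy.le

end TailIntegral

lemma isBigO_exp_of_deriv_le_neg_mul {f f' : ℝ → ℝ} {c : ℝ}
    (hf : ∀ᶠ x in atTop, HasDerivAt f (f' x) x) (hf_nonneg : ∀ᶠ x in atTop, 0 ≤ f x)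
    (hf' : ∀ᶠ x in atTop, f' x ≤ -c * f x) : f =O[atTop] fun x => exp (-c * x) := by
  obtain ⟨a, ha⟩ := eventually_atTop.1 (hf.and (hf_nonneg.and hf'))
  have hD : ∀ x ≥ a,
      HasDerivAt (fun y => f y * exp (c * y)) ((f' x + c * f x) * exp (c * x)) x := fun x hx =>
    ((ha x hx).1.mul (((hasDerivAt_id' x).const_mul c).exp)).congr_deriv (by ring)
  have hanti : AntitoneOn (fun y => f y * exp (c * y)) (Ici a) := by
    refine antitoneOn_of_hasDerivWithinAt_nonpos (convex_Ici a)
      (fun x hx => (hD x hx).continuousAt.continuousWithinAt)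
      (fun x hx => (hD x (interior_subset hx)).hasDerivWithinAt) fun x hx => ?_
    have hx := (ha x (interior_subset hx)).2.2
    nlinarith [exp_pos (c * x)]
  refine IsBigO.of_bound (f a * exp (c * a)) <| (eventually_ge_atTop a).mono fun x hx => ?_
  have hmono := hanti self_mem_Ici hx hx
  rw [norm_of_nonneg (ha x hx).2.1, norm_of_nonneg (exp_pos _).le, neg_mul, exp_neg,
    ← div_eq_mul_inv, le_div_iff₀ (exp_pos _)]
  exact hmono

lemma Asymptotics.IsLittleO.of_hasDerivAt_of_tendsto_atTop {u g u' g' : ℝ → ℝ}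
    (h : u' =o[atTop] g') (hu : ∀ᶠ x in atTop, HasDerivAt u (u' x) x)
    (hg : ∀ᶠ x in atTop, HasDerivAt g (g' x) x) (hg' : ∀ᶠ x in atTop, 0 ≤ g' x)
    (hgtop : Tendsto g atTop atTop) : u =o[atTop] g := by
  refine isLittleO_iff.2 fun ε hε => ?_
  obtain ⟨a, ha⟩ := eventually_atTop.1 (hu.and (hg.and (hg'.and (h.bound (half_pos hε)))))
  have hmv : ∀ x ≥ a, ‖u x - u a‖ ≤ ε / 2 * (g x - g a) := by
    intro x hx
    refine image_norm_le_of_norm_deriv_right_le_deriv_boundary' (f := fun y => u y - u a)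
      (B := fun y => ε / 2 * (g y - g a)) (f' := u') (B' := fun y => ε / 2 * g' y)
      (fun y hy => ((ha y hy.1).1.sub_const _).continuousAt.continuousWithinAt)
      (fun y hy => ((ha y hy.1).1.sub_const _).hasDerivWithinAt) (by simp)
      (fun y hy => (((ha y hy.1).2.1.sub_const _).const_mul _).continuousAt.continuousWithinAt)
      (fun y hy => (((ha y hy.1).2.1.sub_const _).const_mul _).hasDerivWithinAt)
      (fun y hy => ?_) ⟨hx, le_rfl⟩
    have hy := ha y hy.1
    rw [norm_of_nonneg hy.2.2.1] at hy
    exact hy.2.2.2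
  filter_upwards [(hgtop.const_mul_atTop (half_pos hε)).eventually_ge_atTop (‖u a‖ - ε / 2 * g a),
    hgtop.eventually_ge_atTop 0, eventually_ge_atTop a] with x hxlarge hx0 hxa
  rw [norm_of_nonneg hx0]
  linarith [hmv x hxa, norm_sub_norm_le (u x) (u a)]

theorem HasDerivAt.lhopital_atTop_atTop {f g f' g' : ℝ → ℝ} {L : ℝ}
    (hf : ∀ᶠ x in atTop, HasDerivAt f (f' x) x) (hg : ∀ᶠ x in atTop, HasDerivAt g (g' x) x)
    (hg' : ∀ᶠ x in atTop, 0 < g' x) (hgtop : Tendsto g atTop atTop)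
    (hdiv : Tendsto (fun x => f' x / g' x) atTop (𝓝 L)) :
    Tendsto (fun x => f x / g x) atTop (𝓝 L) := by
  have hderiv : (fun x => f' x - L * g' x) =o[atTop] g' := by
    refine (isLittleO_iff_tendsto' (hg'.mono fun x hx h0 => absurd h0 hx.ne')).2 ?_
    rw [← sub_self L]
    refine (hdiv.sub_const L).congr' (hg'.mono fun x hx => ?_)
    field_simp
  have hsub := hderiv.of_hasDerivAt_of_tendsto_atTop
    ((hf.and hg).mono fun x hx => hx.1.sub (hx.2.const_mul L)) hg (hg'.mono fun x hx => hx.le) hgtop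
  rw [← zero_add L]
  refine (hsub.tendsto_div_nhds_zero.add_const L).congr' ?_
  filter_upwards [hgtop.eventually_gt_atTop 0] with x hx
  simp only [Pi.sub_apply]
  field_simp
  ring

section DecayingSolution

variable {u : ℝ → ℝ}

lemma eventually_deriv_le_neg_half_mul (hpos : ∀ x ≥ (1:ℝ), 0 < u x)
    (hasym : Tendsto (fun x => deriv u x / (√x * u x)) atTop (𝓝 (-1))) :
    ∀ᶠ x in atTop, deriv u x ≤ -(1 / 2) * u x := by
  filter_upwards [eventually_ge_atTop 1, hasym.eventually_lt_const (by norm_num : (-1:ℝ) < -1 / 2)]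
    with x hx hlt
  have hux := hpos x hx
  have hsqrt : 1 ≤ √x := one_le_sqrt.2 hx
  rw [div_lt_iff₀ (by positivity)] at hlt
  nlinarith

lemma tendsto_rpow_mul_sq_atTop_nhds_zero (hu : Differentiable ℝ u)
    (hpos : ∀ x ≥ (1:ℝ), 0 < u x)
    (hasym : Tendsto (fun x => deriv u x / (√x * u x)) atTop (𝓝 (-1))) (s : ℝ) :
    Tendsto (fun x => x ^ s * u x ^ 2) atTop (𝓝 0) := by
  have hsq : (fun x => u x ^ 2) =O[atTop] fun x => exp (-1 * x) := by
    refine isBigO_exp_of_deriv_le_neg_mul (f' := fun x => 2 * u x * deriv u x)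
      (Eventually.of_forall fun x => ((hu x).hasDerivAt.pow 2).congr_deriv (by ring))
      (Eventually.of_forall fun x => sq_nonneg (u x)) ?_
    filter_upwards [eventually_ge_atTop 1, eventually_deriv_le_neg_half_mul hpos hasym]
      with x hx hderiv
    nlinarith [hpos x hx]
  exact ((isBigO_refl (fun x : ℝ => x ^ s) atTop).mul hsq).trans_tendsto
    (tendsto_rpow_mul_exp_neg_mul_atTop_nhds_zero s 1 one_pos)

lemma hasDerivAt_sq_mul_rpow_three_halves {x : ℝ} (hu : DifferentiableAt ℝ u x) (hx : 0 < x)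
    (hux : u x ≠ 0) :
    HasDerivAt (fun y => u y ^ 2 * ((1 / 2) * y ^ ((3:ℝ) / 2)))
      (x ^ 2 * u x ^ 2 * (deriv u x / (√x * u x) + 3 / 4 * x ^ (-(3:ℝ) / 2))) x := by
  refine ((hu.hasDerivAt.pow 2).mul
    ((hasDerivAt_rpow_const (Or.inl hx.ne')).const_mul (1 / 2))).congr_deriv ?_
  have e3 : x ^ ((3:ℝ) / 2) = √x ^ 3 := by exact_mod_cast rpow_natCast_div_two hx.le 3
  have e1 : x ^ ((3:ℝ) / 2 - 1) = √x := by norm_num [← sqrt_eq_rpow]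
  have e3' : x ^ (-(3:ℝ) / 2) = (√x ^ 3)⁻¹ := by rw [neg_div, rpow_neg hx.le, e3]
  simp only [Pi.pow_apply, e3, e1, e3']
  field_simp
  linear_combination (√x ^ 2 + x) * (16 * u x * deriv u x * √x ^ 2 + 12 * u x ^ 2) *
    sq_sqrt hx.le

lemma tendsto_integral_Ioi_div_sq (hu : Differentiable ℝ u) (hpos : ∀ x ≥ (1:ℝ), 0 < u x)
    (hasym : Tendsto (fun x => deriv u x / (√x * u x)) atTop (𝓝 (-1)))
    (hint : IntegrableOn (fun t => t ^ 2 * u t ^ 2) (Ioi 1)) :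
    Tendsto (fun x => ((∫ t in Ioi x, t ^ 2 * u t ^ 2) / u x ^ 2) / ((1 / 2) * x ^ ((3:ℝ) / 2)))
      atTop (𝓝 1) := by
  set D : ℝ → ℝ := fun x => deriv u x / (√x * u x) + 3 / 4 * x ^ (-(3:ℝ) / 2)
  have hD : Tendsto D atTop (𝓝 (-1)) := by
    have h0 := (tendsto_rpow_neg_atTop (y := (3:ℝ) / 2) (by norm_num)).const_mul (3 / 4 : ℝ)
    rw [mul_zero] at h0
    simpa [D, neg_div] using hasym.add h0
  have hweight : ∀ x ≥ (1:ℝ), 0 < x ^ 2 * u x ^ 2 := fun x hx => by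
    have := hpos x hx
    have : 0 < x := by linarith
    positivity
  have hg0 : Tendsto (fun x => u x ^ 2 * ((1 / 2) * x ^ ((3:ℝ) / 2))) atTop (𝓝 0) := by
    have h := (tendsto_rpow_mul_sq_atTop_nhds_zero hu hpos hasym ((3:ℝ) / 2)).const_mul (1 / 2)
    rw [mul_zero] at h
    exact h.congr fun x => by ring
  have hratio : Tendsto (fun x => -(x ^ 2 * u x ^ 2) / (x ^ 2 * u x ^ 2 * D x)) atTop (𝓝 1) := by
    have h : Tendsto (fun x => -1 / D x) atTop (𝓝 (-1 / -1)) :=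
      tendsto_const_nhds.div hD (by norm_num)
    rw [neg_div_neg_eq, div_one] at h
    refine h.congr' ((eventually_ge_atTop 1).mono fun x hx => ?_)
    show -1 / D x = -(x ^ 2 * u x ^ 2) / (x ^ 2 * u x ^ 2 * D x)
    rw [neg_div, neg_div, div_mul_cancel_left₀ (hweight x hx).ne', one_div]
  have hcont : Continuous fun t => t ^ 2 * u t ^ 2 := by
    have := hu.continuous
    fun_prop
  have h := HasDerivAt.lhopital_zero_atTop
    ((eventually_gt_atTop 1).mono fun x hx => hasDerivAt_integral_Ioi hint hcont hx)
    ((eventually_ge_atTop 1).mono fun x hx =>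
      hasDerivAt_sq_mul_rpow_three_halves (hu x) (by linarith) (hpos x hx).ne')
    (((eventually_ge_atTop 1).and (hD.eventually_lt_const (by norm_num : (-1:ℝ) < 0))).mono
      fun x hx => mul_ne_zero (hweight x hx.1).ne' hx.2.ne)
    (tendsto_integral_Ioi_atTop_nhds_zero hint) hg0 hratio
  simpa only [div_div] using h

lemma tendsto_deriv_mul_div {v v' : ℝ → ℝ}
    (hu : Differentiable ℝ u) (hpos : ∀ x ≥ (1:ℝ), 0 < u x)
    (hasym : Tendsto (fun x => deriv u x / (√x * u x)) atTop (𝓝 (-1)))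
    (hv : ∀ x ≥ (1:ℝ), HasDerivAt v (v' x) x)
    (hv' : Tendsto (fun x => v' x / ((1 / 2) * x ^ ((3:ℝ) / 2))) atTop (𝓝 1))
    (hv_lim : Tendsto (fun x => v x / ((1 / 5) * x ^ ((5:ℝ) / 2))) atTop (𝓝 1)) :
    Tendsto (fun x => deriv (fun y => u y * v y) x / (-(1 / 5) * x ^ 3 * u x)) atTop (𝓝 1) := by
  have hmain := hasym.neg.mul hv_lim
  rw [neg_neg, one_mul] at hmain
  have hrest := hv'.mul ((tendsto_rpow_neg_atTop (y := (3:ℝ) / 2) (by norm_num)).const_mul (-5 / 2))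
  rw [mul_zero, mul_zero] at hrest
  have hsum := hmain.add hrest
  rw [add_zero] at hsum
  refine hsum.congr' ((eventually_ge_atTop 1).mono fun x hx => ?_)
  have hx0 : 0 < x := by linarith
  have hux := (hpos x hx).ne'
  have e5 : x ^ ((5:ℝ) / 2) = √x ^ 5 := by exact_mod_cast rpow_natCast_div_two hx0.le 5
  have e3 : x ^ ((3:ℝ) / 2) = √x ^ 3 := by exact_mod_cast rpow_natCast_div_two hx0.le 3
  have e6 : x ^ 3 = √x ^ 6 := by rw [show 6 = 2 * 3 from rfl, pow_mul, sq_sqrt hx0.le]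
  have hderiv : HasDerivAt (fun y => u y * v y) (deriv u x * v x + u x * v' x) x :=
    (hu x).hasDerivAt.mul (hv x hx)
  dsimp only
  rw [hderiv.deriv, rpow_neg hx0.le, e5, e3, e6]
  field_simp
  ring

end DecayingSolution

theorem stmt11_general (Ai Ψ h : ℝ → ℝ) (hAi : ContDiff ℝ 2 Ai)
    (hpos : ∀ x ≥ (1:ℝ), 0 < Ai x)
    (hasym : Tendsto (fun x => deriv Ai x / (Real.sqrt x * Ai x)) atTop (nhds (-1)))
    (hInt : IntegrableOn (fun t => t ^ 2 * (Ai t) ^ 2) (Set.Ici 1))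
    (hh : ∀ x ≥ (1:ℝ), HasDerivAt h ((∫ t in Set.Ioi x, t ^ 2 * (Ai t) ^ 2) / (Ai x) ^ 2) x)
    (hΨ : ∀ x, Ψ x = Ai x * h x) :
    Tendsto (fun x => ((∫ t in Set.Ioi x, t ^ 2 * (Ai t) ^ 2) / (Ai x) ^ 2) /
        ((1 / 2) * x ^ ((3:ℝ) / 2))) atTop (nhds 1) ∧
    Tendsto (fun x => h x / ((1 / 5) * x ^ ((5:ℝ) / 2))) atTop (nhds 1) ∧
    Tendsto (fun x => Ψ x / ((1 / 5) * x ^ ((5:ℝ) / 2) * Ai x)) atTop (nhds 1) ∧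
    Tendsto (fun x => deriv Ψ x / (-(1 / 5) * x ^ 3 * Ai x)) atTop (nhds 1) := by
  have hAi' : Differentiable ℝ Ai := hAi.differentiable (by norm_num)
  have hh'_lim := tendsto_integral_Ioi_div_sq hAi' hpos hasym (hInt.mono_set Ioi_subset_Ici_self)
  have hh_lim : Tendsto (fun x => h x / ((1 / 5) * x ^ ((5:ℝ) / 2))) atTop (𝓝 1) := by
    refine HasDerivAt.lhopital_atTop_atTop ((eventually_ge_atTop 1).mono hh)
      ((eventually_gt_atTop 0).mono fun x hx =>
        ((hasDerivAt_rpow_const (p := (5:ℝ) / 2) (Or.inl hx.ne')).const_mul (1 / 5)).congr_deriv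
          (by norm_num; ring))
      ((eventually_gt_atTop 0).mono fun x hx => by positivity)
      ((tendsto_rpow_atTop (by norm_num)).const_mul_atTop (by norm_num)) hh'_lim
  obtain rfl : Ψ = fun x => Ai x * h x := funext hΨ
  refine ⟨hh'_lim, hh_lim, hh_lim.congr' ((eventually_ge_atTop 1).mono fun x hx => ?_),
    tendsto_deriv_mul_div hAi' hpos hasym hh hh'_lim hh_lim⟩
  dsimp only
  rw [mul_comm (Ai x), mul_div_mul_right _ _ (hpos x hx).ne']

/-- Asymptotics of the barrier `Ψ` solving `-Ψ'' + xΨ = x² Ai`, `Ψ(1)=1`, `Ψ(∞)=0`: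
with `Ψ = Ai·h` and `h' = (∫_x^∞ t² Ai² dt)/Ai²`, one has `h' ~ (1/2)x^{3/2}`,
`h ~ (1/5)x^{5/2}`, `Ψ ~ (1/5)x^{5/2}Ai`, and `Ψ' ~ -(1/5)x³ Ai` as `x → ∞`. -/
theorem stmt11 (Ai Ψ h : ℝ → ℝ) (hAi : ContDiff ℝ 2 Ai)
    (heqAi : ∀ x, deriv (deriv Ai) x = x * Ai x)
    (hpos : ∀ x ≥ (1:ℝ), 0 < Ai x)
    (hdec : ∀ x ≥ (1:ℝ), deriv Ai x < 0)
    (hasym : Tendsto (fun x => deriv Ai x / (Real.sqrt x * Ai x)) atTop (nhds (-1)))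
    (hInt : IntegrableOn (fun t => t ^ 2 * (Ai t) ^ 2) (Set.Ici 1))
    (hh : ∀ x ≥ (1:ℝ), HasDerivAt h ((∫ t in Set.Ioi x, t ^ 2 * (Ai t) ^ 2) / (Ai x) ^ 2) x)
    (hΨ : ∀ x, Ψ x = Ai x * h x)
    (hΨeq : ∀ x ≥ (1:ℝ), -(deriv (deriv Ψ) x) + x * Ψ x = x ^ 2 * Ai x)
    (hΨ1 : Ψ 1 = 1) (hΨpos : ∀ x ≥ (1:ℝ), 0 < Ψ x)
    (hΨ0 : Tendsto Ψ atTop (nhds 0)) :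
    Tendsto (fun x => ((∫ t in Set.Ioi x, t ^ 2 * (Ai t) ^ 2) / (Ai x) ^ 2) /
        ((1 / 2) * x ^ ((3:ℝ) / 2))) atTop (nhds 1) ∧
    Tendsto (fun x => h x / ((1 / 5) * x ^ ((5:ℝ) / 2))) atTop (nhds 1) ∧
    Tendsto (fun x => Ψ x / ((1 / 5) * x ^ ((5:ℝ) / 2) * Ai x)) atTop (nhds 1) ∧
    Tendsto (fun x => deriv Ψ x / (-(1 / 5) * x ^ 3 * Ai x)) atTop (nhds 1) :=
  stmt11_general Ai Ψ h hAi hpos hasym hInt hh hΨ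
end

section
/- Let 0 < p ≤ 1 and define u₀(x) = x^{1/p} for x ≥ 0 and u₀(x) = 0 for x ≤ 0, and Q(x) = (p+1)u₀(x)^p - x, so that Q(x) = px for x ≥ 0 and Q(x) = -x for x ≤ 0. If u₁, u₂ are two solutions of -u'' - xu + |u|^p u = 0 on ℝ with u_i > u₀ everywhere, u_i → 0 as x → -∞ and u_i - x^{1/p} → 0 as x → +∞, then u₁ ≡ u₂. -/
/-!
The difference `w = u₁ - u₂` of two solutions satisfies
`w'' = (u₁ ^ (p + 1) - u₂ ^ (p + 1)) - x w`. Wherever `u₁ > u₂ > u₀` the tangent-line inequality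
for the convex function `t ↦ t ^ (p + 1)` gives `u₁ ^ (p + 1) - u₂ ^ (p + 1) ≥ (p + 1) u₂ ^ p w`,
and `(p + 1) u₂ ^ p > x` because `u₂ > u₀`; so `w'' > 0` wherever `w > 0`. Since `w → 0` at `±∞`,
a positive value of `w` would produce a positive global maximum, which cannot have `w'' > 0`.
Hence `w ≤ 0`, and by symmetry `w = 0`.
-/

open Filter Topology

theorem Real.add_mul_rpow_sub_one_mul_sub_le_rpow {q a b : ℝ} (hq : 1 ≤ q) (hb : 0 < b)
    (ha : 0 ≤ a) : b ^ q + q * b ^ (q - 1) * (a - b) ≤ a ^ q := by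
  have hbern := one_add_mul_self_le_rpow_one_add
    (show -1 ≤ a / b - 1 by linarith [div_nonneg ha hb.le]) hq
  rw [add_sub_cancel, Real.div_rpow ha hb.le, le_div_iff₀ (by positivity)] at hbern
  calc b ^ q + q * b ^ (q - 1) * (a - b) = (1 + q * (a / b - 1)) * b ^ q := by
        rw [Real.rpow_sub_one hb.ne']; field_simp
    _ ≤ a ^ q := hbern

theorem Real.mul_sub_lt_rpow_mul_sub_rpow_mul {p x a b : ℝ} (hp : 0 ≤ p) (hb : 0 < b)
    (hba : b < a) (hx : x < (p + 1) * b ^ p) : x * (a - b) < a ^ p * a - b ^ p * b := by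
  have h := Real.add_mul_rpow_sub_one_mul_sub_le_rpow (by linarith : 1 ≤ p + 1) hb
    (hb.trans hba).le
  rw [add_sub_cancel_right, Real.rpow_add_one hb.ne', Real.rpow_add_one (hb.trans hba).ne'] at h
  nlinarith [mul_lt_mul_of_pos_right hx (sub_pos.2 hba)]

theorem lt_rpow_of_max_rpow_one_div_lt {p x b : ℝ} (hp : 0 < p) (hb : max x 0 ^ (1 / p) < b) :
    x < b ^ p := by
  have hm : 0 ≤ max x 0 := le_max_right x 0
  have h := Real.rpow_lt_rpow (Real.rpow_nonneg hm _) hb hp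
  rw [← Real.rpow_mul hm, one_div_mul_cancel hp.ne', Real.rpow_one] at h
  exact (le_max_left x 0).trans_lt h

theorem not_isLocalMax_of_deriv_deriv_pos {f : ℝ → ℝ} {x₀ : ℝ} (hc : ContinuousAt f x₀)
    (hf : 0 < deriv (deriv f) x₀) : ¬IsLocalMax f x₀ := by
  intro hmax
  have hmin := isLocalMin_of_deriv_deriv_pos hf hmax.deriv_eq_zero hc
  have hconst : f =ᶠ[𝓝 x₀] fun _ => f x₀ := by
    filter_upwards [hmax, hmin] with x h₁ h₂ using le_antisymm h₁ h₂
  have := hconst.deriv.deriv_eq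
  simp only [deriv_const', deriv_const] at this
  exact hf.ne' this

theorem nonpos_of_tendsto_zero_of_deriv_deriv_pos {w : ℝ → ℝ} (hw : Continuous w)
    (hbot : Tendsto w atBot (𝓝 0)) (htop : Tendsto w atTop (𝓝 0))
    (hconvex : ∀ x, 0 < w x → 0 < deriv (deriv w) x) (x : ℝ) : w x ≤ 0 := by
  by_contra! hx
  have hcocompact : ∀ᶠ y in cocompact ℝ, w y ≤ w x := by
    rw [cocompact_eq_atBot_atTop]
    exact (hbot.sup htop).eventually (eventually_le_nhds hx)
  obtain ⟨x₀, hx₀⟩ := hw.exists_forall_ge' x hcocompact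
  exact not_isLocalMax_of_deriv_deriv_pos hw.continuousAt
    (hconvex x₀ (hx.trans_le (hx₀ x))) (Eventually.of_forall hx₀)

theorem deriv_deriv_sub {f g : ℝ → ℝ} (hf : ContDiff ℝ 2 f) (hg : ContDiff ℝ 2 g) (x : ℝ) :
    deriv (deriv fun y => f y - g y) x = deriv (deriv f) x - deriv (deriv g) x := by
  have hd : (deriv fun y => f y - g y) = fun y => deriv f y - deriv g y :=
    funext fun y => deriv_sub (hf.differentiable two_ne_zero y) (hg.differentiable two_ne_zero y)
  rw [hd]
  exact deriv_sub (hf.differentiable_deriv_two x) (hg.differentiable_deriv_two x)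

theorem le_of_solution_of_gt_threshold {p : ℝ} (hp : 0 < p) {u₁ u₂ : ℝ → ℝ}
    (h1 : ContDiff ℝ 2 u₁) (h2 : ContDiff ℝ 2 u₂)
    (heq1 : ∀ x, -(deriv (deriv u₁) x) - x * u₁ x + |u₁ x| ^ p * u₁ x = 0)
    (heq2 : ∀ x, -(deriv (deriv u₂) x) - x * u₂ x + |u₂ x| ^ p * u₂ x = 0)
    (hgt2 : ∀ x, max x 0 ^ (1 / p) < u₂ x)
    (hbot : Tendsto (fun x => u₁ x - u₂ x) atBot (𝓝 0))
    (htop : Tendsto (fun x => u₁ x - u₂ x) atTop (𝓝 0)) (x : ℝ) :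
    u₁ x ≤ u₂ x := by
  refine sub_nonpos.1 <| nonpos_of_tendsto_zero_of_deriv_deriv_pos
    (w := fun y => u₁ y - u₂ y) (h1.continuous.sub h2.continuous) hbot htop (fun y hy => ?_) x
  have hlt : u₂ y < u₁ y := sub_pos.1 hy
  have hpos2 : 0 < u₂ y := (Real.rpow_nonneg (le_max_right y 0) _).trans_lt (hgt2 y)
  have hpos1 : 0 < u₁ y := hpos2.trans hlt
  -- above the threshold `u₀`, the nonlinearity `u ↦ u ^ (p + 1) - y u` is strictly increasing
  have hmono := Real.mul_sub_lt_rpow_mul_sub_rpow_mul hp.le hpos2 hlt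
    ((lt_rpow_of_max_rpow_one_div_lt hp (hgt2 y)).trans_le
      (le_mul_of_one_le_left (by positivity) (by linarith)))
  have e1 := heq1 y
  have e2 := heq2 y
  rw [abs_of_pos hpos1] at e1
  rw [abs_of_pos hpos2] at e2
  rw [deriv_deriv_sub h1 h2]
  linarith

theorem stmt19_general (p : ℝ) (hp0 : 0 < p) (u₁ u₂ : ℝ → ℝ)
    (h1 : ContDiff ℝ 2 u₁) (h2 : ContDiff ℝ 2 u₂)
    (heq1 : ∀ x, -(deriv (deriv u₁) x) - x * u₁ x + |u₁ x| ^ p * u₁ x = 0)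
    (heq2 : ∀ x, -(deriv (deriv u₂) x) - x * u₂ x + |u₂ x| ^ p * u₂ x = 0)
    (hgt1 : ∀ x, (max x 0) ^ (1 / p) < u₁ x)
    (hgt2 : ∀ x, (max x 0) ^ (1 / p) < u₂ x)
    (hbot1 : Tendsto u₁ atBot (nhds 0)) (hbot2 : Tendsto u₂ atBot (nhds 0))
    (htop1 : Tendsto (fun x => u₁ x - x ^ (1 / p)) atTop (nhds 0))
    (htop2 : Tendsto (fun x => u₂ x - x ^ (1 / p)) atTop (nhds 0)) :
    u₁ = u₂ := by
  have hbot : Tendsto (fun x => u₁ x - u₂ x) atBot (𝓝 0) := by simpa using hbot1.sub hbot2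
  have htop : Tendsto (fun x => u₁ x - u₂ x) atTop (𝓝 0) := by simpa using htop1.sub htop2
  funext x
  exact le_antisymm (le_of_solution_of_gt_threshold hp0 h1 h2 heq1 heq2 hgt2 hbot htop x)
    (le_of_solution_of_gt_threshold hp0 h2 h1 heq2 heq1 hgt1 (by simpa using hbot.neg)
      (by simpa using htop.neg) x)

/-- Uniqueness in the case `0 < p ≤ 1`: two solutions of `-u'' - xu + |u|^p u = 0` on `ℝ`
lying strictly above `u₀(x) = max{x,0}^{1/p}`, tending to `0` at `-∞` and to `x^{1/p}`
at `+∞`, coincide. -/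
theorem stmt19 (p : ℝ) (hp0 : 0 < p) (hp1 : p ≤ 1) (u₁ u₂ : ℝ → ℝ)
    (h1 : ContDiff ℝ 2 u₁) (h2 : ContDiff ℝ 2 u₂)
    (heq1 : ∀ x, -(deriv (deriv u₁) x) - x * u₁ x + |u₁ x| ^ p * u₁ x = 0)
    (heq2 : ∀ x, -(deriv (deriv u₂) x) - x * u₂ x + |u₂ x| ^ p * u₂ x = 0)
    (hgt1 : ∀ x, (max x 0) ^ (1 / p) < u₁ x)
    (hgt2 : ∀ x, (max x 0) ^ (1 / p) < u₂ x)
    (hbot1 : Tendsto u₁ atBot (nhds 0)) (hbot2 : Tendsto u₂ atBot (nhds 0))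
    (htop1 : Tendsto (fun x => u₁ x - x ^ (1 / p)) atTop (nhds 0))
    (htop2 : Tendsto (fun x => u₂ x - x ^ (1 / p)) atTop (nhds 0)) :
    u₁ = u₂ :=
  stmt19_general p hp0 u₁ u₂ h1 h2 heq1 heq2 hgt1 hgt2 hbot1 hbot2 htop1 htop2
end
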